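/- arXiv:1108.1553 — 3 statements merged into one kernel-verified Lean document; each statement's English description precedes it below -/
import Mathlib

section
/- Let n ≥ 1, let u, ρ : ℝ × ℝⁿ → ℝⁿ be smooth with ρₜ = −∇ρ·u − ρ(∇·u), and let p : ℝ × ℝⁿ → ℝⁿ be smooth with ∂ₜp(t,x) = u(t, p(t,x)) and p(0,x) = x. Then for every x and every t, ρ(t, p(t,x)) · det(∇ₓp(t,x)) = ρ(0,x); that is, the quantity (ρ∘p)·det(∇ₓp) is conserved along the flow. -/
open MeasureTheory

noncomputable section

/-- Spatial partial derivative of a scalar function in the `i`-th coordinate direction. -/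
def pd {n : ℕ} (i : Fin n) (f : (Fin n → ℝ) → ℝ) : (Fin n → ℝ) → ℝ :=
  fun x => fderiv ℝ f x (Pi.single i 1)

/-- Spatial Jacobian matrix `∇ₓp(t,x)` of a time-dependent map `p : ℝ × ℝⁿ → ℝⁿ`. -/
def Jx {n : ℕ} (p : ℝ × (Fin n → ℝ) → (Fin n → ℝ)) (t : ℝ) (x : Fin n → ℝ) :
    Matrix (Fin n) (Fin n) ℝ :=
  fun i j => pd j (fun y => p (t, y) i) x

/-- Spatial divergence `(∇·u)(t,z) = Σᵢ ∂uᵢ/∂xᵢ (t,z)` of a time-dependent vector field. -/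
def divt {n : ℕ} (u : ℝ × (Fin n → ℝ) → (Fin n → ℝ)) (t : ℝ) (z : Fin n → ℝ) : ℝ :=
  ∑ i, pd i (fun y => u (t, y) i) z

section Helpers

variable {E F : Type*} [NormedAddCommGroup E] [NormedSpace ℝ E]
  [NormedAddCommGroup F] [NormedSpace ℝ F]

lemma hasFDerivAt_slice2 {f : ℝ × E → F} {t : ℝ} {x : E}
    (hf : DifferentiableAt ℝ f (t, x)) :
    HasFDerivAt (fun y => f (t, y))
      ((fderiv ℝ f (t, x)).comp (ContinuousLinearMap.inr ℝ ℝ E)) x :=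
  hf.hasFDerivAt.comp x (hasFDerivAt_prodMk_right t x)

lemma fderiv_slice2 {f : ℝ × E → F} {t : ℝ} {x : E}
    (hf : DifferentiableAt ℝ f (t, x)) (v : E) :
    fderiv ℝ (fun y => f (t, y)) x v = fderiv ℝ f (t, x) (0, v) := by
  rw [(hasFDerivAt_slice2 hf).fderiv]; rfl

lemma hasDerivAt_slice1 {f : ℝ × E → F} {t : ℝ} {x : E}
    (hf : DifferentiableAt ℝ f (t, x)) :
    HasDerivAt (fun s => f (s, x)) (fderiv ℝ f (t, x) (1, 0)) t :=
  hf.hasFDerivAt.comp_hasDerivAt t ((hasDerivAt_id t).prodMk (hasDerivAt_const t x))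

lemma hasDerivAt_apply_pi {n : ℕ} {c : ℝ → (Fin n → ℝ)} {c' : Fin n → ℝ} {t : ℝ}
    (h : HasDerivAt c c' t) (i : Fin n) : HasDerivAt (fun s => c s i) (c' i) t :=
  ((ContinuousLinearMap.proj (R := ℝ) (φ := fun _ : Fin n => ℝ) i).hasFDerivAt).comp_hasDerivAt t h

end Helpers

/-- The determinant as a continuous multilinear map in the rows. -/
def detCM (n : ℕ) : ContinuousMultilinearMap ℝ (fun _ : Fin n => (Fin n → ℝ)) ℝ :=
  (Matrix.detRowAlternating (R := ℝ) (n := Fin n)).toMultilinearMap.mkContinuous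
    (Nat.factorial n) (by
      intro m
      rw [Matrix.detRowAlternating]
      show |Matrix.det (Matrix.of m)| ≤ _
      rw [Matrix.det_apply]
      calc |∑ σ : Equiv.Perm (Fin n), Equiv.Perm.sign σ • ∏ i, Matrix.of m (σ i) i|
          ≤ ∑ σ : Equiv.Perm (Fin n), |Equiv.Perm.sign σ • ∏ i, Matrix.of m (σ i) i| :=
            Finset.abs_sum_le_sum_abs _ _
        _ ≤ ∑ _σ : Equiv.Perm (Fin n), ∏ i, ‖m i‖ := by
            apply Finset.sum_le_sum
            intro σ _
            have h1 : |Equiv.Perm.sign σ • ∏ i, Matrix.of m (σ i) i|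
                = |∏ i, Matrix.of m (σ i) i| := by
              rcases Int.units_eq_one_or (Equiv.Perm.sign σ) with h | h <;> simp [h]
            rw [h1, Finset.abs_prod]
            have h2 : ∀ i : Fin n, |Matrix.of m (σ i) i| ≤ ‖m (σ i)‖ := fun i => by
              simpa using norm_le_pi_norm (m (σ i)) i
            calc ∏ i, |Matrix.of m (σ i) i| ≤ ∏ i, ‖m (σ i)‖ :=
                  Finset.prod_le_prod (fun i _ => abs_nonneg _) (fun i _ => h2 i)
              _ = ∏ i, ‖m i‖ := Equiv.prod_comp σ (fun i => ‖m i‖)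
        _ = (Nat.factorial n) * ∏ i, ‖m i‖ := by
            rw [Finset.sum_const, Finset.card_univ, Fintype.card_perm]
            simp [nsmul_eq_mul])

/-- Time derivative of each entry of the Jacobian of the flow. -/
lemma hasDerivAt_Jx {n : ℕ} {u p : ℝ × (Fin n → ℝ) → (Fin n → ℝ)}
    (hu : ContDiff ℝ (⊤ : ℕ∞) u) (hp : ContDiff ℝ (⊤ : ℕ∞) p)
    (hflow : ∀ t x, deriv (fun s => p (s, x)) t = u (t, p (t, x)))
    (t : ℝ) (x : Fin n → ℝ) (i j : Fin n) :
    HasDerivAt (fun s => Jx p s x i j)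
      (∑ k, pd k (fun y => u (t, y) i) (p (t, x)) * Jx p t x k j) t := by
  classical
  have hpi : ContDiff ℝ (⊤ : ℕ∞) (fun q => p q i) := contDiff_pi.mp hp i
  set pi : ℝ × (Fin n → ℝ) → ℝ := fun q => p q i with hpidef
  set Fd := fderiv ℝ pi with hFdef
  have hF : ContDiff ℝ (⊤ : ℕ∞) Fd := hpi.fderiv_right (by simp)
  have hfun : (fun s => Jx p s x i j) = fun s => Fd (s, x) (0, Pi.single j 1) := by
    funext s
    show fderiv ℝ (fun y => pi (s, y)) x (Pi.single j 1) = _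
    rw [fderiv_slice2 (hpi.differentiable (by simp) (s, x)) (Pi.single j 1)]
  have hB : HasDerivAt (fun s => Fd (s, x) (0, Pi.single j 1))
      (fderiv ℝ Fd (t, x) (1, 0) (0, Pi.single j 1)) t := by
    have h1 : HasDerivAt (fun s => Fd (s, x)) (fderiv ℝ Fd (t, x) (1, 0)) t :=
      hasDerivAt_slice1 (hF.differentiable (by simp) (t, x))
    have h2 := h1.clm_apply (hasDerivAt_const t ((0 : ℝ × (Fin n → ℝ)).1, Pi.single j 1))
    simpa using h2
  have hsym : fderiv ℝ Fd (t, x) (1, 0) (0, Pi.single j 1)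
      = fderiv ℝ Fd (t, x) (0, Pi.single j 1) (1, 0) :=
    hpi.contDiffAt.isSymmSndFDerivAt (by rw [minSmoothness_of_isRCLikeNormedField]; show ((2 : ℕ∞) : WithTop ℕ∞) ≤ ((⊤ : ℕ∞) : WithTop ℕ∞); exact WithTop.coe_le_coe.mpr le_top) _ _
  have hD : fderiv ℝ Fd (t, x) (0, Pi.single j 1)
      = fderiv ℝ (fun y => Fd (t, y)) x (Pi.single j 1) :=
    (fderiv_slice2 (hF.differentiable (by simp) (t, x)) (Pi.single j 1)).symm
  have hg : HasFDerivAt (fun y => Fd (t, y))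
      ((fderiv ℝ Fd (t, x)).comp (ContinuousLinearMap.inr ℝ ℝ _)) x :=
    hasFDerivAt_slice2 (hF.differentiable (by simp) (t, x))
  have hE : fderiv ℝ (fun y => Fd (t, y)) x (Pi.single j 1) (1, 0)
      = fderiv ℝ (fun y => Fd (t, y) (1, 0)) x (Pi.single j 1) := by
    set Φ := ContinuousLinearMap.apply ℝ ℝ ((1 : ℝ), (0 : Fin n → ℝ))
    have h3 : HasFDerivAt (fun y => Φ (Fd (t, y)))
        (Φ.comp (fderiv ℝ (fun y => Fd (t, y)) x)) x :=
      Φ.hasFDerivAt.comp x hg.differentiableAt.hasFDerivAt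
    rw [show (fun y => Fd (t, y) (1, 0)) = fun y => Φ (Fd (t, y)) from rfl, h3.fderiv]
    rfl
  have hFu : (fun y => Fd (t, y) ((1 : ℝ), (0 : Fin n → ℝ))) = fun y => u (t, p (t, y)) i := by
    funext y
    have h1 : HasDerivAt (fun s => pi (s, y)) (Fd (t, y) (1, 0)) t :=
      hasDerivAt_slice1 (hpi.differentiable (by simp) (t, y))
    have h2 : HasDerivAt (fun s => p (s, y)) (u (t, p (t, y))) t := by
      rw [← hflow t y]
      exact (hasDerivAt_slice1 (hp.differentiable (by simp) (t, y))).differentiableAt.hasDerivAt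
    exact h1.unique (hasDerivAt_apply_pi h2 i)
  have hq : HasFDerivAt (fun y => p (t, y))
      ((fderiv ℝ p (t, x)).comp (ContinuousLinearMap.inr ℝ ℝ _)) x :=
    hasFDerivAt_slice2 (hp.differentiable (by simp) (t, x))
  set Dq := (fderiv ℝ p (t, x)).comp (ContinuousLinearMap.inr ℝ ℝ (Fin n → ℝ)) with hDq
  set z := p (t, x) with hz
  have hui : ContDiff ℝ (⊤ : ℕ∞) (fun q' => u q' i) := contDiff_pi.mp hu i
  have huislice : HasFDerivAt (fun w => u (t, w) i)
      ((fderiv ℝ (fun q' => u q' i) (t, z)).comp (ContinuousLinearMap.inr ℝ ℝ _)) z :=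
    hasFDerivAt_slice2 (hui.differentiable (by simp) (t, z))
  have hchain : HasFDerivAt (fun y => u (t, p (t, y)) i)
      ((fderiv ℝ (fun w => u (t, w) i) z).comp Dq) x := by
    have := (huislice.differentiableAt.hasFDerivAt).comp x hq
    exact this
  have hcol : ∀ k, Dq (Pi.single j 1) k = Jx p t x k j := by
    intro k
    have hk : HasFDerivAt (fun y => p (t, y) k)
        ((ContinuousLinearMap.proj (R := ℝ) (φ := fun _ : Fin n => ℝ) k).comp Dq) x := by
      exact ((ContinuousLinearMap.proj (R := ℝ) (φ := fun _ : Fin n => ℝ)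
        k).hasFDerivAt).comp x hq
    show _ = pd j (fun y => p (t, y) k) x
    rw [pd, hk.fderiv]
    rfl
  have hG : fderiv ℝ (fun y => u (t, p (t, y)) i) x (Pi.single j 1)
      = ∑ k, pd k (fun y => u (t, y) i) z * Jx p t x k j := by
    rw [hchain.fderiv]
    show fderiv ℝ (fun w => u (t, w) i) z (Dq (Pi.single j 1)) = _
    have hw : Dq (Pi.single j 1)
        = ∑ k, (Jx p t x k j) • (Pi.single k (1 : ℝ) : Fin n → ℝ) := by
      rw [show (∑ k, (Jx p t x k j) • (Pi.single k (1:ℝ) : Fin n → ℝ))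
          = ∑ k, (Pi.single k (Jx p t x k j) : Fin n → ℝ) by
        refine Finset.sum_congr rfl fun k _ => ?_
        rw [← Pi.single_smul, smul_eq_mul, mul_one]]
      rw [Finset.univ_sum_single (fun k => Jx p t x k j)]
      funext k; exact hcol k
    rw [hw, map_sum]
    refine Finset.sum_congr rfl fun k _ => ?_
    rw [_root_.map_smul, smul_eq_mul, mul_comm]
    rfl
  rw [hfun]
  have := hB
  rw [hsym, hD, hE, show (fun y => Fd (t, y) (1, 0)) = fun y => u (t, p (t, y)) i from hFu, hG]
    at this
  exact this

/-- Liouville's formula, given the entrywise derivatives of the Jacobian. -/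
lemma hasDerivAt_det_Jx {n : ℕ} {u p : ℝ × (Fin n → ℝ) → (Fin n → ℝ)}
    (t : ℝ) (x : Fin n → ℝ)
    (hJ : ∀ i j, HasDerivAt (fun s => Jx p s x i j)
      (∑ k, pd k (fun y => u (t, y) i) (p (t, x)) * Jx p t x k j) t) :
    HasDerivAt (fun s => (Jx p s x).det) (divt u t (p (t, x)) * (Jx p t x).det) t := by
  classical
  set A : Fin n → Fin n → ℝ := fun i k => pd k (fun y => u (t, y) i) (p (t, x)) with hA
  set m : Fin n → Fin n → ℝ := fun i j => Jx p t x i j with hm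
  have hrows : HasDerivAt (fun s => (fun i j => Jx p s x i j))
      (fun i j => ∑ k, A i k * m k j) t := by
    rw [hasDerivAt_pi]
    intro i
    rw [hasDerivAt_pi]
    intro j
    exact hJ i j
  have hdet : HasDerivAt (fun s => detCM n (fun i j => Jx p s x i j))
      ((detCM n).linearDeriv m (fun i j => ∑ k, A i k * m k j)) t :=
    ((detCM n).hasFDerivAt (x := m)).comp_hasDerivAt t hrows
  have hval : (detCM n).linearDeriv m (fun i j => ∑ k, A i k * m k j)
      = divt u t (p (t, x)) * (Jx p t x).det := by
    rw [ContinuousMultilinearMap.linearDeriv_apply]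
    have key : ∀ i, detCM n (Function.update m i (fun j => ∑ k, A i k * m k j))
        = A i i * detCM n m := by
      intro i
      have h1 : (fun j => ∑ k, A i k * m k j) = ∑ k, A i k • m k := by
        funext j
        simp [Finset.sum_apply]
      rw [h1]
      have h2 : detCM n (Function.update m i (∑ k, A i k • m k))
          = ∑ k, detCM n (Function.update m i (A i k • m k)) :=
        (detCM n).toMultilinearMap.map_update_sum Finset.univ i (fun k => A i k • m k) m
      rw [h2]
      rw [Finset.sum_eq_single i]
      · rw [show detCM n (Function.update m i (A i i • m i))
            = A i i • detCM n (Function.update m i (m i)) from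
          (detCM n).toMultilinearMap.map_update_smul m i (A i i) (m i),
          Function.update_eq_self, smul_eq_mul]
      · intro k _ hk
        rw [show detCM n (Function.update m i (A i k • m k))
            = A i k • detCM n (Function.update m i (m k)) from
          (detCM n).toMultilinearMap.map_update_smul m i (A i k) (m k)]
        rw [show detCM n (Function.update m i (m k))
            = Matrix.detRowAlternating (Function.update m i (m k)) from rfl]
        rw [Matrix.detRowAlternating.map_update_self (v := m) (Ne.symm hk)]
        simp
      · intro h; exact absurd (Finset.mem_univ i) h
    rw [Finset.sum_congr rfl (fun i _ => key i), ← Finset.sum_mul]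
    congr 1
  have hfun : (fun s => detCM n (fun i j => Jx p s x i j)) = fun s => (Jx p s x).det := rfl
  rw [hfun, hval] at hdet
  exact hdet

/-- Time derivative of `ρ` along the flow. -/
lemma hasDerivAt_rho_comp {n : ℕ} {u ρ p : ℝ × (Fin n → ℝ) → (Fin n → ℝ)}
    (hρ : ContDiff ℝ (⊤ : ℕ∞) ρ)
    (hρeq : ∀ t x i, deriv (fun s => ρ (s, x) i) t
      = -(fderiv ℝ (fun y => ρ (t, y) i) x (u (t, x))) - ρ (t, x) i * divt u t x)
    (hp : ContDiff ℝ (⊤ : ℕ∞) p)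
    (hflow : ∀ t x, deriv (fun s => p (s, x)) t = u (t, p (t, x)))
    (t : ℝ) (x : Fin n → ℝ) (i : Fin n) :
    HasDerivAt (fun s => ρ (s, p (s, x)) i)
      (-(ρ (t, p (t, x)) i * divt u t (p (t, x)))) t := by
  have hρi : ContDiff ℝ (⊤ : ℕ∞) (fun q => ρ q i) := contDiff_pi.mp hρ i
  set z := p (t, x) with hz
  have hpx : HasDerivAt (fun s => p (s, x)) (u (t, z)) t := by
    rw [hz, ← hflow t x]
    exact (hasDerivAt_slice1 (hp.differentiable (by simp) (t, x))).differentiableAt.hasDerivAt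
  have hγ : HasDerivAt (fun s => ((s, p (s, x)) : ℝ × (Fin n → ℝ))) (1, u (t, z)) t :=
    (hasDerivAt_id t).prodMk hpx
  have hcomp : HasDerivAt (fun s => ρ (s, p (s, x)) i)
      (fderiv ℝ (fun q => ρ q i) (t, z) (1, u (t, z))) t :=
    by have hd := hρi.differentiable (by simp) (t, z); exact hd.hasFDerivAt.comp_hasDerivAt t hγ
  have hsplit : fderiv ℝ (fun q => ρ q i) (t, z) (1, u (t, z))
      = fderiv ℝ (fun q => ρ q i) (t, z) (1, 0)
        + fderiv ℝ (fun q => ρ q i) (t, z) (0, u (t, z)) := by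
    rw [← map_add]
    norm_num
  have h1 : fderiv ℝ (fun q => ρ q i) (t, z) (1, 0)
      = -(fderiv ℝ (fun y => ρ (t, y) i) z (u (t, z))) - ρ (t, z) i * divt u t z := by
    rw [← hρeq t z i]
    exact ((hasDerivAt_slice1 (hρi.differentiable (by simp) (t, z))).deriv).symm
  have h2 : fderiv ℝ (fun q => ρ q i) (t, z) (0, u (t, z))
      = fderiv ℝ (fun y => ρ (t, y) i) z (u (t, z)) :=
    (fderiv_slice2 (hρi.differentiable (by simp) (t, z)) (u (t, z))).symm
  have hval : fderiv ℝ (fun q => ρ q i) (t, z) (1, u (t, z))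
      = -(ρ (t, z) i * divt u t z) := by
    rw [hsplit, h1, h2]; ring
  rw [hval] at hcomp
  exact hcomp

/-- conservation of `(ρ∘p)·det(∇ₓp)` along the flow `p` of `u` for solutions of
`ρₜ = −∇ρ·u − ρ(∇·u)`. -/
theorem rho_jacobian_conserved (n : ℕ) (hn : 1 ≤ n)
    (u ρ : ℝ × (Fin n → ℝ) → (Fin n → ℝ))
    (hu : ContDiff ℝ (⊤ : ℕ∞) u) (hρ : ContDiff ℝ (⊤ : ℕ∞) ρ)
    (hρeq : ∀ t x i, deriv (fun s => ρ (s, x) i) t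
      = -(fderiv ℝ (fun y => ρ (t, y) i) x (u (t, x))) - ρ (t, x) i * divt u t x)
    (p : ℝ × (Fin n → ℝ) → (Fin n → ℝ)) (hp : ContDiff ℝ (⊤ : ℕ∞) p)
    (hflow : ∀ t x, deriv (fun s => p (s, x)) t = u (t, p (t, x)))
    (hinit : ∀ x, p (0, x) = x) :
    ∀ t x i, ρ (t, p (t, x)) i * (Jx p t x).det = ρ (0, x) i := by
  intro t x i
  set f : ℝ → ℝ := fun s => ρ (s, p (s, x)) i * (Jx p s x).det with hf
  have hderiv : ∀ s, HasDerivAt f 0 s := by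
    intro s
    have h1 := hasDerivAt_rho_comp hρ hρeq hp hflow s x i
    have h2 := hasDerivAt_det_Jx s x (fun i' j' => hasDerivAt_Jx hu hp hflow s x i' j')
    have h3 := h1.mul h2
    have : -(ρ (s, p (s, x)) i * divt u s (p (s, x))) * (Jx p s x).det
        + ρ (s, p (s, x)) i * (divt u s (p (s, x)) * (Jx p s x).det) = 0 := by ring
    rwa [this] at h3
  have hconst : f t = f 0 :=
    is_const_of_deriv_eq_zero (fun s => (hderiv s).differentiableAt)
      (fun s => (hderiv s).deriv) t 0
  have hJ0 : Jx p 0 x = (1 : Matrix (Fin n) (Fin n) ℝ) := by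
    funext i' j'
    show pd j' (fun y => p (0, y) i') x = _
    have : (fun y => p (0, y) i') = fun y : Fin n → ℝ => y i' := by
      funext y; rw [hinit y]
    rw [pd, this]
    have hproj : fderiv ℝ (fun y : Fin n → ℝ => y i') x
        = ContinuousLinearMap.proj (R := ℝ) (φ := fun _ : Fin n => ℝ) i' :=
      (ContinuousLinearMap.proj (R := ℝ) (φ := fun _ : Fin n => ℝ) i').fderiv
    rw [hproj]
    show (Pi.single j' (1:ℝ) : Fin n → ℝ) i' = (1 : Matrix (Fin n) (Fin n) ℝ) i' j'
    rw [Pi.single_apply, Matrix.one_apply]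
  have : f 0 = ρ (0, x) i := by
    rw [hf]
    show ρ (0, p (0, x)) i * (Jx p 0 x).det = _
    rw [hinit x, hJ0, Matrix.det_one, mul_one]
  exact hconst.trans this
end
end

section
/- Let k₁, k₂ ∈ 2πℕ be positive integer multiples of 2π and let v : ℝ² → ℝ² be v(x,y) = (sin(k₁x)sin(k₂y), sin(k₁x)sin(k₂y)). For i ∈ {1,2} set g⁽ⁱ⁾ = ∇vᵢ + eᵢ(∇·v), where e₁ = (1,0), e₂ = (0,1); explicitly g⁽¹⁾ = (2k₁cos(k₁x)sin(k₂y) + k₂sin(k₁x)cos(k₂y), k₂sin(k₁x)cos(k₂y)) and g⁽²⁾ = (k₁cos(k₁x)sin(k₂y), k₁cos(k₁x)sin(k₂y) + 2k₂sin(k₁x)cos(k₂y)). Let h⁽ⁱ⁾ : ℝ² → ℝ² be a smooth ℤ²-periodic map with μ(h⁽ⁱ⁾ⱼ) − Δh⁽ⁱ⁾ⱼ = g⁽ⁱ⁾ⱼ for j = 1,2. Then the unnormalized sectional curvature values S(eᵢ,v) = (1/4)∫_{[0,1]²} g⁽ⁱ⁾·h⁽ⁱ⁾ dx dy satisfy S(e₁,v)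 = (1/8)(2k₁² + k₂²)/(k₁² + k₂²) and S(e₂,v) = (1/8)(2k₂² + k₁²)/(k₁² + k₂²); in particular S(eᵢ,v) > 0 for i = 1,2 and all such k₁,k₂. -/
open MeasureTheory

noncomputable section

/-- The Laplacian `Δ = Σᵢ ∂²/∂xᵢ²`. -/
def lap {n : ℕ} (f : (Fin n → ℝ) → ℝ) : (Fin n → ℝ) → ℝ :=
  fun x => ∑ i, pd i (pd i f) x

/-- Mean value over the fundamental domain `[0,1]ⁿ`. -/
def mean {n : ℕ} (f : (Fin n → ℝ) → ℝ) : ℝ := ∫ x in Set.Icc (0 : Fin n → ℝ) 1, f x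

/-- `ℤⁿ`-periodicity of a vector field. -/
def PerV {n : ℕ} (u : (Fin n → ℝ) → (Fin n → ℝ)) : Prop :=
  ∀ (x : Fin n → ℝ) (m : Fin n → ℤ), u (x + fun i => (m i : ℝ)) = u x

/-- Divergence `∇·u = Σᵢ ∂uᵢ/∂xᵢ`. -/
def divg {n : ℕ} (u : (Fin n → ℝ) → (Fin n → ℝ)) : (Fin n → ℝ) → ℝ :=
  fun x => ∑ i, pd i (fun y => u y i) x

/-- Jacobian of `a` applied to the vector field `b`:  `(∇a·b)ᵢ = Σⱼ (∂aᵢ/∂xⱼ) bⱼ`. -/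
def jacApp {n : ℕ} (a b : (Fin n → ℝ) → (Fin n → ℝ)) : (Fin n → ℝ) → (Fin n → ℝ) :=
  fun x i => fderiv ℝ (fun y => a y i) x (b x)

/-- Transposed Jacobian of `a` applied to `b`:  `((∇a)ᵀb)ᵢ = Σⱼ (∂aⱼ/∂xᵢ) bⱼ`. -/
def jacTApp {n : ℕ} (a b : (Fin n → ℝ) → (Fin n → ℝ)) : (Fin n → ℝ) → (Fin n → ℝ) :=
  fun x i => ∑ j, pd i (fun y => a y j) x * b x j

/-- scalar `ℤ²`-periodicity -/
def Per2 (F : (Fin 2 → ℝ) → ℝ) : Prop :=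
  ∀ (x : Fin 2 → ℝ) (m : Fin 2 → ℤ), F (x + fun i => (m i : ℝ)) = F x

lemma box_eq (f : (Fin 2 → ℝ) → ℝ) (hf : Continuous f) :
    ∫ x in Set.Icc (0 : Fin 2 → ℝ) 1, f x
      = ∫ s in (0:ℝ)..1, ∫ t in (0:ℝ)..1, f ![s, t] := by
  have hmp : MeasurePreserving (MeasurableEquiv.finTwoArrow (α := ℝ)) volume volume :=
    volume_preserving_finTwoArrow ℝ
  have hpre : (MeasurableEquiv.finTwoArrow (α := ℝ)) ⁻¹'
      (Set.Icc (0:ℝ) 1 ×ˢ Set.Icc (0:ℝ) 1) = Set.Icc (0 : Fin 2 → ℝ) 1 := by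
    ext x
    simp [MeasurableEquiv.finTwoArrow, Set.mem_Icc, Pi.le_def, Fin.forall_fin_two,
      Prod.le_def]
  have key : ∀ x : Fin 2 → ℝ, f x = f ![x 0, x 1] := by
    intro x; congr 1; ext i; fin_cases i <;> simp
  have step := hmp.setIntegral_preimage_emb (MeasurableEquiv.measurableEmbedding _)
      (fun p : ℝ × ℝ => f ![p.1, p.2]) (Set.Icc (0:ℝ) 1 ×ˢ Set.Icc (0:ℝ) 1)
  rw [hpre] at step
  simp only [MeasurableEquiv.finTwoArrow_apply] at step
  calc ∫ x in Set.Icc (0 : Fin 2 → ℝ) 1, f x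
      = ∫ x in Set.Icc (0 : Fin 2 → ℝ) 1, f ![x 0, x 1] :=
        setIntegral_congr_fun measurableSet_Icc fun x _ => key x
    _ = ∫ p in Set.Icc (0:ℝ) 1 ×ˢ Set.Icc (0:ℝ) 1, f ![p.1, p.2] := by
        convert step using 2
    _ = ∫ s in Set.Icc (0:ℝ) 1, ∫ t in Set.Icc (0:ℝ) 1, f ![s, t] := by
        apply setIntegral_prod
        have hm : Continuous (fun p : ℝ × ℝ => (![p.1, p.2] : Fin 2 → ℝ)) := by
          apply continuous_pi; intro i
          fin_cases i
          · simpa using continuous_fst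
          · simpa using continuous_snd
        exact ContinuousOn.integrableOn_compact (isCompact_Icc.prod isCompact_Icc)
          ((hf.comp hm).continuousOn)
    _ = ∫ s in (0:ℝ)..1, ∫ t in (0:ℝ)..1, f ![s, t] := by
        rw [intervalIntegral.integral_of_le zero_le_one,
          ← integral_Icc_eq_integral_Ioc]
        refine setIntegral_congr_fun measurableSet_Icc fun s _ => ?_
        rw [intervalIntegral.integral_of_le zero_le_one, ← integral_Icc_eq_integral_Ioc]
/-- scalar periodicity -/

lemma hd_sin (k t : ℝ) : HasDerivAt (fun s => Real.sin (k * s)) (k * Real.cos (k * t)) t := by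
  have h1 : HasDerivAt (fun s : ℝ => k * s) k t := by
    simpa using (hasDerivAt_id t).const_mul k
  exact ((Real.hasDerivAt_sin (k * t)).comp t h1).congr_deriv (by ring)

lemma hd_cos (k t : ℝ) : HasDerivAt (fun s => Real.cos (k * s)) (-(k * Real.sin (k * t))) t := by
  have h1 : HasDerivAt (fun s : ℝ => k * s) k t := by
    simpa using (hasDerivAt_id t).const_mul k
  exact ((Real.hasDerivAt_cos (k * t)).comp t h1).congr_deriv (by ring)

lemma hasFDerivAt_sep (φ ψ : ℝ → ℝ) (φ' ψ' : ℝ → ℝ)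
    (hφ : ∀ t, HasDerivAt φ (φ' t) t) (hψ : ∀ t, HasDerivAt ψ (ψ' t) t) (x : Fin 2 → ℝ) :
    HasFDerivAt (fun y : Fin 2 → ℝ => φ (y 0) * ψ (y 1))
      ((φ' (x 0) * ψ (x 1)) • (ContinuousLinearMap.proj 0 : (Fin 2 → ℝ) →L[ℝ] ℝ)
        + (φ (x 0) * ψ' (x 1)) • (ContinuousLinearMap.proj 1 : (Fin 2 → ℝ) →L[ℝ] ℝ)) x := by
  have h0 : HasFDerivAt (fun y : Fin 2 → ℝ => φ (y 0))
      (φ' (x 0) • (ContinuousLinearMap.proj 0 : (Fin 2 → ℝ) →L[ℝ] ℝ)) x :=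
    (hφ (x 0)).comp_hasFDerivAt x
      ((ContinuousLinearMap.proj 0 : (Fin 2 → ℝ) →L[ℝ] ℝ).hasFDerivAt)
  have h1 : HasFDerivAt (fun y : Fin 2 → ℝ => ψ (y 1))
      (ψ' (x 1) • (ContinuousLinearMap.proj 1 : (Fin 2 → ℝ) →L[ℝ] ℝ)) x :=
    (hψ (x 1)).comp_hasFDerivAt x
      ((ContinuousLinearMap.proj 1 : (Fin 2 → ℝ) →L[ℝ] ℝ).hasFDerivAt)
  have : HasFDerivAt (fun y : Fin 2 → ℝ => φ (y 0) * ψ (y 1)) _ x := h0.mul h1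
  refine this.congr_fderiv ?_
  ext v
  simp [smul_smul]
  ring

lemma pd_sep0 (φ ψ : ℝ → ℝ) (φ' ψ' : ℝ → ℝ)
    (hφ : ∀ t, HasDerivAt φ (φ' t) t) (hψ : ∀ t, HasDerivAt ψ (ψ' t) t) (x : Fin 2 → ℝ) :
    pd 0 (fun y : Fin 2 → ℝ => φ (y 0) * ψ (y 1)) x = φ' (x 0) * ψ (x 1) := by
  rw [pd, (hasFDerivAt_sep φ ψ φ' ψ' hφ hψ x).fderiv]
  simp [Pi.single_apply]

lemma pd_sep1 (φ ψ : ℝ → ℝ) (φ' ψ' : ℝ → ℝ)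
    (hφ : ∀ t, HasDerivAt φ (φ' t) t) (hψ : ∀ t, HasDerivAt ψ (ψ' t) t) (x : Fin 2 → ℝ) :
    pd 1 (fun y : Fin 2 → ℝ => φ (y 0) * ψ (y 1)) x = φ (x 0) * ψ' (x 1) := by
  rw [pd, (hasFDerivAt_sep φ ψ φ' ψ' hφ hψ x).fderiv]
  simp [Pi.single_apply]

lemma contDiff_sep (φ ψ : ℝ → ℝ) (hφ : ContDiff ℝ (⊤ : ℕ∞) φ) (hψ : ContDiff ℝ (⊤ : ℕ∞) ψ) :
    ContDiff ℝ (⊤ : ℕ∞) (fun y : Fin 2 → ℝ => φ (y 0) * ψ (y 1)) :=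
  (hφ.comp (ContinuousLinearMap.proj 0 : (Fin 2 → ℝ) →L[ℝ] ℝ).contDiff).mul
    (hψ.comp (ContinuousLinearMap.proj 1 : (Fin 2 → ℝ) →L[ℝ] ℝ).contDiff)

lemma contDiff_pd (F : (Fin 2 → ℝ) → ℝ) (hF : ContDiff ℝ (⊤ : ℕ∞) F) (i : Fin 2) :
    ContDiff ℝ (⊤ : ℕ∞) (pd i F) := by
  have h1 : ContDiff ℝ (⊤ : ℕ∞) (fderiv ℝ F) := hF.fderiv_right (by simp)
  exact (ContinuousLinearMap.apply ℝ ℝ (Pi.single i 1 : Fin 2 → ℝ)).contDiff.comp h1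

lemma per_pd (F : (Fin 2 → ℝ) → ℝ) (hF : ContDiff ℝ (⊤ : ℕ∞) F) (hP : Per2 F) (i : Fin 2) :
    Per2 (pd i F) := by
  intro x m
  have hc : (fun y : Fin 2 → ℝ => F (y + fun i => (m i : ℝ))) = F :=
    funext fun y => hP y m
  have hd : DifferentiableAt ℝ F (x + fun i => (m i : ℝ)) :=
    (hF.differentiable (by simp)) _
  have h2 : HasFDerivAt (fun y : Fin 2 → ℝ => F (y + fun i => (m i : ℝ)))
      (fderiv ℝ F (x + fun i => (m i : ℝ))) x := by
    have hadd : HasFDerivAt (fun y : Fin 2 → ℝ => y + fun i => (m i : ℝ))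
        (ContinuousLinearMap.id ℝ (Fin 2 → ℝ)) x := (hasFDerivAt_id x).add_const _
    have := hd.hasFDerivAt.comp x hadd; simp only [ContinuousLinearMap.comp_id] at this; exact this
  rw [hc] at h2
  simp only [pd, h2.fderiv]
lemma iint_swap (f : ℝ → ℝ → ℝ) (hf : Continuous fun p : ℝ × ℝ => f p.1 p.2) :
    ∫ s in (0:ℝ)..1, ∫ t in (0:ℝ)..1, f s t
      = ∫ t in (0:ℝ)..1, ∫ s in (0:ℝ)..1, f s t := by
  have hint : Integrable (Function.uncurry f)
      ((volume.restrict (Set.Ioc (0:ℝ) 1)).prod (volume.restrict (Set.Ioc (0:ℝ) 1))) := by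
    rw [Measure.prod_restrict]
    apply IntegrableOn.mono_set
      (ContinuousOn.integrableOn_compact (isCompact_Icc.prod isCompact_Icc) hf.continuousOn)
    exact Set.prod_mono Set.Ioc_subset_Icc_self Set.Ioc_subset_Icc_self
  have := integral_integral_swap (f := f) hint
  simp only [intervalIntegral.integral_of_le zero_le_one]
  exact this

lemma cont_line0 (G : (Fin 2 → ℝ) → ℝ) (hG : Continuous G) (t : ℝ) :
    Continuous (fun s : ℝ => G ![s, t]) := by
  exact hG.comp (by
    apply continuous_pi; intro j; fin_cases j <;> simp <;>
      first | exact continuous_id | exact continuous_const)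

lemma cont_line1 (G : (Fin 2 → ℝ) → ℝ) (hG : Continuous G) (s : ℝ) :
    Continuous (fun t : ℝ => G ![s, t]) := by
  exact hG.comp (by
    apply continuous_pi; intro j; fin_cases j <;> simp <;>
      first | exact continuous_id | exact continuous_const)

lemma cont_pair (G : (Fin 2 → ℝ) → ℝ) (hG : Continuous G) :
    Continuous (fun p : ℝ × ℝ => G ![p.1, p.2]) := by
  exact hG.comp (by
    apply continuous_pi; intro j; fin_cases j <;> simp <;>
      first | exact continuous_fst | exact continuous_snd)

lemma hasDerivAt_line0 (F : (Fin 2 → ℝ) → ℝ) (hF : ContDiff ℝ (⊤ : ℕ∞) F) (t s : ℝ) :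
    HasDerivAt (fun s : ℝ => F ![s, t]) (pd 0 F ![s, t]) s := by
  have hline : HasDerivAt (fun s : ℝ => (![s, t] : Fin 2 → ℝ)) (Pi.single 0 1) s := by
    have : HasDerivAt (fun s : ℝ => s • (Pi.single 0 1 : Fin 2 → ℝ) + ![0, t])
        ((1:ℝ) • (Pi.single 0 1 : Fin 2 → ℝ)) s :=
      ((hasDerivAt_id s).smul_const _).add_const _
    have he : (fun s : ℝ => s • (Pi.single 0 1 : Fin 2 → ℝ) + ![0, t])
        = fun s : ℝ => (![s, t] : Fin 2 → ℝ) := by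
      funext s; ext i; fin_cases i <;> simp [Pi.single_apply]
    rw [he] at this; simpa using this
  exact (((hF.differentiable (by simp)) _).hasFDerivAt.comp_hasDerivAt s hline)

lemma hasDerivAt_line1 (F : (Fin 2 → ℝ) → ℝ) (hF : ContDiff ℝ (⊤ : ℕ∞) F) (s t : ℝ) :
    HasDerivAt (fun t : ℝ => F ![s, t]) (pd 1 F ![s, t]) t := by
  have hline : HasDerivAt (fun t : ℝ => (![s, t] : Fin 2 → ℝ)) (Pi.single 1 1) t := by
    have : HasDerivAt (fun t : ℝ => t • (Pi.single 1 1 : Fin 2 → ℝ) + ![s, 0])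
        ((1:ℝ) • (Pi.single 1 1 : Fin 2 → ℝ)) t :=
      ((hasDerivAt_id t).smul_const _).add_const _
    have he : (fun t : ℝ => t • (Pi.single 1 1 : Fin 2 → ℝ) + ![s, 0])
        = fun t : ℝ => (![s, t] : Fin 2 → ℝ) := by
      funext t; ext i; fin_cases i <;> simp [Pi.single_apply]
    rw [he] at this; simpa using this
  exact (((hF.differentiable (by simp)) _).hasFDerivAt.comp_hasDerivAt t hline)

lemma int_pd_zero (F : (Fin 2 → ℝ) → ℝ) (hF : ContDiff ℝ (⊤ : ℕ∞) F) (hP : Per2 F) (i : Fin 2) :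
    ∫ x in Set.Icc (0 : Fin 2 → ℝ) 1, pd i F x = 0 := by
  rw [box_eq _ ((contDiff_pd F hF i).continuous)]
  fin_cases i
  · have inner : ∀ t : ℝ, (∫ s in (0:ℝ)..1, pd 0 F ![s, t]) = 0 := by
      intro t
      have hftc : (∫ s in (0:ℝ)..1, pd 0 F ![s, t]) = F ![1, t] - F ![0, t] := by
        refine intervalIntegral.integral_eq_sub_of_hasDerivAt
          (fun s _ => hasDerivAt_line0 F hF t s) ?_
        exact (cont_line0 _ (contDiff_pd F hF 0).continuous t).intervalIntegrable 0 1
      have hper : F ![1, t] = F ![0, t] := by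
        have := hP ![0, t] ![1, 0]
        have he : (![0, t] + fun i => ((![1, 0] : Fin 2 → ℤ) i : ℝ)) = ![1, t] := by
          funext i; fin_cases i <;> simp
        rw [he] at this; exact this
      rw [hftc, hper, sub_self]
    have hsw := iint_swap (fun s t => pd 0 F ![s, t])
      (cont_pair _ (contDiff_pd F hF 0).continuous)
    beta_reduce at hsw
    show ∫ s in (0:ℝ)..1, ∫ t in (0:ℝ)..1, pd 0 F ![s, t] = 0
    rw [hsw, intervalIntegral.integral_congr (fun t _ => inner t)]
    simp
  · have inner : ∀ s : ℝ, (∫ t in (0:ℝ)..1, pd 1 F ![s, t]) = 0 := by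
      intro s
      have hftc : (∫ t in (0:ℝ)..1, pd 1 F ![s, t]) = F ![s, 1] - F ![s, 0] := by
        refine intervalIntegral.integral_eq_sub_of_hasDerivAt
          (fun t _ => hasDerivAt_line1 F hF s t) ?_
        exact (cont_line1 _ (contDiff_pd F hF 1).continuous s).intervalIntegrable 0 1
      have hper : F ![s, 1] = F ![s, 0] := by
        have := hP ![s, 0] ![0, 1]
        have he : (![s, 0] + fun i => ((![0, 1] : Fin 2 → ℤ) i : ℝ)) = ![s, 1] := by
          funext i; fin_cases i <;> simp
        rw [he] at this; exact this
      rw [hftc, hper, sub_self]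
    show ∫ s in (0:ℝ)..1, ∫ t in (0:ℝ)..1, pd 1 F ![s, t] = 0
    calc (∫ s in (0:ℝ)..1, ∫ t in (0:ℝ)..1, pd 1 F ![s, t])
        = ∫ s in (0:ℝ)..1, (0:ℝ) := intervalIntegral.integral_congr (fun s _ => inner s)
      _ = 0 := by simp
lemma boxIntegrable (G : (Fin 2 → ℝ) → ℝ) (hG : Continuous G) :
    IntegrableOn G (Set.Icc (0 : Fin 2 → ℝ) 1) :=
  ContinuousOn.integrableOn_compact isCompact_Icc hG.continuousOn

lemma pd_mul (u w : (Fin 2 → ℝ) → ℝ) (hu : ContDiff ℝ (⊤ : ℕ∞) u) (hw : ContDiff ℝ (⊤ : ℕ∞) w)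
    (i : Fin 2) (x : Fin 2 → ℝ) :
    pd i (fun y => u y * w y) x = pd i u x * w x + u x * pd i w x := by
  simp only [pd]
  rw [fderiv_fun_mul ((hu.differentiable (by simp)) x) ((hw.differentiable (by simp)) x)]
  simp
  ring

lemma per_mul (u w : (Fin 2 → ℝ) → ℝ) (hu : Per2 u) (hw : Per2 w) :
    Per2 (fun y => u y * w y) := fun x m => by simp [hu x m, hw x m]

lemma ibp1 (u w : (Fin 2 → ℝ) → ℝ) (hu : ContDiff ℝ (⊤ : ℕ∞) u) (hw : ContDiff ℝ (⊤ : ℕ∞) w)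
    (hpu : Per2 u) (hpw : Per2 w) (i : Fin 2) :
    ∫ x in Set.Icc (0 : Fin 2 → ℝ) 1, pd i u x * w x
      = - ∫ x in Set.Icc (0 : Fin 2 → ℝ) 1, u x * pd i w x := by
  have h0 := int_pd_zero (fun y => u y * w y) (hu.mul hw) (per_mul u w hpu hpw) i
  rw [setIntegral_congr_fun measurableSet_Icc
    (fun x _ => pd_mul u w hu hw i x)] at h0
  rw [integral_add
    ((boxIntegrable (fun x => pd i u x * w x) (((contDiff_pd u hu i).continuous).mul hw.continuous)))
    ((boxIntegrable (fun x => u x * pd i w x) ((hu.continuous).mul (contDiff_pd w hw i).continuous)))] at h0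
  linarith

lemma ibp2 (u w : (Fin 2 → ℝ) → ℝ) (hu : ContDiff ℝ (⊤ : ℕ∞) u) (hw : ContDiff ℝ (⊤ : ℕ∞) w)
    (hpu : Per2 u) (hpw : Per2 w) (i : Fin 2) :
    ∫ x in Set.Icc (0 : Fin 2 → ℝ) 1, pd i (pd i u) x * w x
      = ∫ x in Set.Icc (0 : Fin 2 → ℝ) 1, u x * pd i (pd i w) x := by
  have h1 := ibp1 (pd i u) w (contDiff_pd u hu i) hw (per_pd u hu hpu i) hpw i
  have h2 := ibp1 u (pd i w) hu (contDiff_pd w hw i) hpu (per_pd w hw hpw i) i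
  rw [h1]
  have : ∀ x, pd i u x * pd i w x = u x * pd i (pd i w) x → True := fun _ _ => trivial
  have h3 : (∫ x in Set.Icc (0 : Fin 2 → ℝ) 1, u x * pd i (pd i w) x)
      = - ∫ x in Set.Icc (0 : Fin 2 → ℝ) 1, pd i u x * pd i w x := by
    have := h2
    have hcomm : (∫ x in Set.Icc (0 : Fin 2 → ℝ) 1, pd i u x * pd i w x)
        = ∫ x in Set.Icc (0 : Fin 2 → ℝ) 1, u x * pd i (pd i w) x → True := fun _ => trivial
    linarith [h2]
  linarith [h3]

lemma ibp_lap (u w : (Fin 2 → ℝ) → ℝ) (hu : ContDiff ℝ (⊤ : ℕ∞) u) (hw : ContDiff ℝ (⊤ : ℕ∞) w)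
    (hpu : Per2 u) (hpw : Per2 w) :
    ∫ x in Set.Icc (0 : Fin 2 → ℝ) 1, lap u x * w x
      = ∫ x in Set.Icc (0 : Fin 2 → ℝ) 1, u x * lap w x := by
  have e1 : ∀ x, lap u x * w x
      = pd 0 (pd 0 u) x * w x + pd 1 (pd 1 u) x * w x := by
    intro x; simp [lap, Fin.sum_univ_two]; ring
  have e2 : ∀ x, u x * lap w x
      = u x * pd 0 (pd 0 w) x + u x * pd 1 (pd 1 w) x := by
    intro x; simp [lap, Fin.sum_univ_two]; ring
  rw [setIntegral_congr_fun measurableSet_Icc (fun x _ => e1 x),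
      setIntegral_congr_fun measurableSet_Icc (fun x _ => e2 x),
      integral_add
        (boxIntegrable (fun x => pd 0 (pd 0 u) x * w x) (((contDiff_pd _ (contDiff_pd u hu 0) 0).continuous).mul hw.continuous))
        (boxIntegrable (fun x => pd 1 (pd 1 u) x * w x) (((contDiff_pd _ (contDiff_pd u hu 1) 1).continuous).mul hw.continuous)),
      integral_add
        (boxIntegrable (fun x => u x * pd 0 (pd 0 w) x) ((hu.continuous).mul (contDiff_pd _ (contDiff_pd w hw 0) 0).continuous))
        (boxIntegrable (fun x => u x * pd 1 (pd 1 w) x) ((hu.continuous).mul (contDiff_pd _ (contDiff_pd w hw 1) 1).continuous)),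
      ibp2 u w hu hw hpu hpw 0, ibp2 u w hu hw hpu hpw 1]
-- 1D trig integrals over [0,1] with frequency k = 2πK

lemma kprop {k : ℝ} (hk : ∃ K : ℕ, 0 < K ∧ k = 2 * Real.pi * K) :
    k ≠ 0 ∧ Real.sin k = 0 ∧ Real.cos k = 1 ∧ 0 < k := by
  obtain ⟨K, hK, rfl⟩ := hk
  have hπ := Real.pi_pos
  have hKpos : (0:ℝ) < K := by exact_mod_cast hK
  refine ⟨by positivity, ?_, ?_, by positivity⟩
  · have := Real.sin_nat_mul_pi (2 * K)
    rw [show ((2 * K : ℕ):ℝ) * Real.pi = 2 * Real.pi * K by push_cast; ring] at this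
    exact this
  · have := Real.cos_nat_mul_two_pi K
    rw [show (K:ℝ) * (2 * Real.pi) = 2 * Real.pi * K by ring] at this
    exact this

lemma intS {k : ℝ} (hk : ∃ K : ℕ, 0 < K ∧ k = 2 * Real.pi * K) :
    ∫ t in (0:ℝ)..1, Real.sin (k * t) = 0 := by
  obtain ⟨h0, hs, hc, _⟩ := kprop hk
  rw [intervalIntegral.integral_comp_mul_left _ h0]
  simp [integral_sin, hc]

lemma intC {k : ℝ} (hk : ∃ K : ℕ, 0 < K ∧ k = 2 * Real.pi * K) :
    ∫ t in (0:ℝ)..1, Real.cos (k * t) = 0 := by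
  obtain ⟨h0, hs, hc, _⟩ := kprop hk
  rw [intervalIntegral.integral_comp_mul_left _ h0]
  simp [integral_cos, hs]

lemma intSsq {k : ℝ} (hk : ∃ K : ℕ, 0 < K ∧ k = 2 * Real.pi * K) :
    ∫ t in (0:ℝ)..1, Real.sin (k * t) ^ 2 = 1/2 := by
  obtain ⟨h0, hs, hc, _⟩ := kprop hk
  rw [show (fun t => Real.sin (k * t) ^ 2) = fun t => (fun u => Real.sin u ^ 2) (k * t) from rfl,
    intervalIntegral.integral_comp_mul_left (fun u => Real.sin u ^ 2) h0]
  rw [integral_sin_sq]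
  simp [hs, hc]
  field_simp

lemma intCsq {k : ℝ} (hk : ∃ K : ℕ, 0 < K ∧ k = 2 * Real.pi * K) :
    ∫ t in (0:ℝ)..1, Real.cos (k * t) ^ 2 = 1/2 := by
  obtain ⟨h0, hs, hc, _⟩ := kprop hk
  rw [show (fun t => Real.cos (k * t) ^ 2) = fun t => (fun u => Real.cos u ^ 2) (k * t) from rfl,
    intervalIntegral.integral_comp_mul_left (fun u => Real.cos u ^ 2) h0]
  rw [integral_cos_sq]
  simp [hs, hc]
  field_simp

lemma intSC {k : ℝ} (hk : ∃ K : ℕ, 0 < K ∧ k = 2 * Real.pi * K) :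
    ∫ t in (0:ℝ)..1, Real.sin (k * t) * Real.cos (k * t) = 0 := by
  obtain ⟨h0, hs, hc, _⟩ := kprop hk
  rw [show (fun t => Real.sin (k * t) * Real.cos (k * t))
      = fun t => (fun u => Real.sin u * Real.cos u) (k * t) from rfl,
    intervalIntegral.integral_comp_mul_left (fun u => Real.sin u * Real.cos u) h0]
  rw [integral_sin_mul_cos₁]
  simp [hs]
/-- the general ansatz `a cos(k₁x)sin(k₂y) + b sin(k₁x)cos(k₂y)` -/

def gf (k₁ k₂ a b : ℝ) : (Fin 2 → ℝ) → ℝ :=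
  fun x => a * Real.cos (k₁ * x 0) * Real.sin (k₂ * x 1)
         + b * Real.sin (k₁ * x 0) * Real.cos (k₂ * x 1)

lemma hasFDerivAt_add_sep (φ₁ ψ₁ φ₁' ψ₁' φ₂ ψ₂ φ₂' ψ₂' : ℝ → ℝ)
    (hφ₁ : ∀ t, HasDerivAt φ₁ (φ₁' t) t) (hψ₁ : ∀ t, HasDerivAt ψ₁ (ψ₁' t) t)
    (hφ₂ : ∀ t, HasDerivAt φ₂ (φ₂' t) t) (hψ₂ : ∀ t, HasDerivAt ψ₂ (ψ₂' t) t)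
    (x : Fin 2 → ℝ) :
    HasFDerivAt (fun y : Fin 2 → ℝ => φ₁ (y 0) * ψ₁ (y 1) + φ₂ (y 0) * ψ₂ (y 1))
      (((φ₁' (x 0) * ψ₁ (x 1)) • (ContinuousLinearMap.proj 0 : (Fin 2 → ℝ) →L[ℝ] ℝ)
        + (φ₁ (x 0) * ψ₁' (x 1)) • (ContinuousLinearMap.proj 1 : (Fin 2 → ℝ) →L[ℝ] ℝ))
       + ((φ₂' (x 0) * ψ₂ (x 1)) • (ContinuousLinearMap.proj 0 : (Fin 2 → ℝ) →L[ℝ] ℝ)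
        + (φ₂ (x 0) * ψ₂' (x 1)) • (ContinuousLinearMap.proj 1 : (Fin 2 → ℝ) →L[ℝ] ℝ))) x :=
  (hasFDerivAt_sep φ₁ ψ₁ φ₁' ψ₁' hφ₁ hψ₁ x).add (hasFDerivAt_sep φ₂ ψ₂ φ₂' ψ₂' hφ₂ hψ₂ x)

lemma pd0_add_sep (φ₁ ψ₁ φ₁' ψ₁' φ₂ ψ₂ φ₂' ψ₂' : ℝ → ℝ)
    (hφ₁ : ∀ t, HasDerivAt φ₁ (φ₁' t) t) (hψ₁ : ∀ t, HasDerivAt ψ₁ (ψ₁' t) t)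
    (hφ₂ : ∀ t, HasDerivAt φ₂ (φ₂' t) t) (hψ₂ : ∀ t, HasDerivAt ψ₂ (ψ₂' t) t)
    (x : Fin 2 → ℝ) :
    pd 0 (fun y : Fin 2 → ℝ => φ₁ (y 0) * ψ₁ (y 1) + φ₂ (y 0) * ψ₂ (y 1)) x
      = φ₁' (x 0) * ψ₁ (x 1) + φ₂' (x 0) * ψ₂ (x 1) := by
  rw [pd, (hasFDerivAt_add_sep φ₁ ψ₁ φ₁' ψ₁' φ₂ ψ₂ φ₂' ψ₂' hφ₁ hψ₁ hφ₂ hψ₂ x).fderiv]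
  simp [Pi.single_apply]

lemma pd1_add_sep (φ₁ ψ₁ φ₁' ψ₁' φ₂ ψ₂ φ₂' ψ₂' : ℝ → ℝ)
    (hφ₁ : ∀ t, HasDerivAt φ₁ (φ₁' t) t) (hψ₁ : ∀ t, HasDerivAt ψ₁ (ψ₁' t) t)
    (hφ₂ : ∀ t, HasDerivAt φ₂ (φ₂' t) t) (hψ₂ : ∀ t, HasDerivAt ψ₂ (ψ₂' t) t)
    (x : Fin 2 → ℝ) :
    pd 1 (fun y : Fin 2 → ℝ => φ₁ (y 0) * ψ₁ (y 1) + φ₂ (y 0) * ψ₂ (y 1)) x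
      = φ₁ (x 0) * ψ₁' (x 1) + φ₂ (x 0) * ψ₂' (x 1) := by
  rw [pd, (hasFDerivAt_add_sep φ₁ ψ₁ φ₁' ψ₁' φ₂ ψ₂ φ₂' ψ₂' hφ₁ hψ₁ hφ₂ hψ₂ x).fderiv]
  simp [Pi.single_apply]

-- derivative helpers for scaled trig

lemma hd_asin (a k : ℝ) : ∀ t, HasDerivAt (fun s => a * Real.sin (k * s))
    (a * (k * Real.cos (k * t))) t := fun t => (hd_sin k t).const_mul a

lemma hd_acos (a k : ℝ) : ∀ t, HasDerivAt (fun s => a * Real.cos (k * s))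
    (a * -(k * Real.sin (k * t))) t := fun t => (hd_cos k t).const_mul a

lemma gf_eq (k₁ k₂ a b : ℝ) : gf k₁ k₂ a b
    = fun y : Fin 2 → ℝ => (fun t => a * Real.cos (k₁ * t)) (y 0) * (fun t => Real.sin (k₂ * t)) (y 1)
      + (fun t => b * Real.sin (k₁ * t)) (y 0) * (fun t => Real.cos (k₂ * t)) (y 1) := by
  funext y; simp [gf]

lemma pd0_gf (k₁ k₂ a b : ℝ) (x : Fin 2 → ℝ) :
    pd 0 (gf k₁ k₂ a b) x
      = (a * -(k₁ * Real.sin (k₁ * x 0))) * Real.sin (k₂ * x 1)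
        + (b * (k₁ * Real.cos (k₁ * x 0))) * Real.cos (k₂ * x 1) := by
  rw [gf_eq]
  exact pd0_add_sep _ _ _ _ _ _ _ _ (hd_acos a k₁) (fun t => hd_sin k₂ t)
    (hd_asin b k₁) (fun t => hd_cos k₂ t) x

lemma pd1_gf (k₁ k₂ a b : ℝ) (x : Fin 2 → ℝ) :
    pd 1 (gf k₁ k₂ a b) x
      = (a * Real.cos (k₁ * x 0)) * (k₂ * Real.cos (k₂ * x 1))
        + (b * Real.sin (k₁ * x 0)) * -(k₂ * Real.sin (k₂ * x 1)) := by
  rw [gf_eq]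
  exact pd1_add_sep _ _ _ _ _ _ _ _ (hd_acos a k₁) (fun t => hd_sin k₂ t)
    (hd_asin b k₁) (fun t => hd_cos k₂ t) x

lemma lap_gf (k₁ k₂ a b : ℝ) (x : Fin 2 → ℝ) :
    lap (gf k₁ k₂ a b) x = -(k₁^2 + k₂^2) * gf k₁ k₂ a b x := by
  have h0 : pd 0 (gf k₁ k₂ a b)
      = fun y : Fin 2 → ℝ => (fun t => (-(a * k₁)) * Real.sin (k₁ * t)) (y 0)
          * (fun t => Real.sin (k₂ * t)) (y 1)
        + (fun t => (b * k₁) * Real.cos (k₁ * t)) (y 0) * (fun t => Real.cos (k₂ * t)) (y 1) := by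
    funext y; rw [pd0_gf]; ring
  have h1 : pd 1 (gf k₁ k₂ a b)
      = fun y : Fin 2 → ℝ => (fun t => (a * k₂) * Real.cos (k₁ * t)) (y 0)
          * (fun t => Real.cos (k₂ * t)) (y 1)
        + (fun t => (-(b * k₂)) * Real.sin (k₁ * t)) (y 0) * (fun t => Real.sin (k₂ * t)) (y 1) := by
    funext y; rw [pd1_gf]; ring
  have p00 : pd 0 (pd 0 (gf k₁ k₂ a b)) x
      = (-(a * k₁) * (k₁ * Real.cos (k₁ * x 0))) * Real.sin (k₂ * x 1)
        + ((b * k₁) * -(k₁ * Real.sin (k₁ * x 0))) * Real.cos (k₂ * x 1) := by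
    rw [h0]
    exact pd0_add_sep _ _ _ _ _ _ _ _ (hd_asin _ k₁) (fun t => hd_sin k₂ t)
      (hd_acos _ k₁) (fun t => hd_cos k₂ t) x
  have p11 : pd 1 (pd 1 (gf k₁ k₂ a b)) x
      = ((a * k₂) * Real.cos (k₁ * x 0)) * -(k₂ * Real.sin (k₂ * x 1))
        + ((-(b * k₂)) * Real.sin (k₁ * x 0)) * (k₂ * Real.cos (k₂ * x 1)) := by
    rw [h1]
    exact pd1_add_sep _ _ _ _ _ _ _ _ (hd_acos _ k₁) (fun t => hd_cos k₂ t)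
      (hd_asin _ k₁) (fun t => hd_sin k₂ t) x
  rw [lap, Fin.sum_univ_two, p00, p11, gf]
  ring

lemma contDiff_k (k : ℝ) (f : ℝ → ℝ) (hf : ContDiff ℝ (⊤ : ℕ∞) f) (a : ℝ) :
    ContDiff ℝ (⊤ : ℕ∞) (fun t => a * f (k * t)) :=
  contDiff_const.mul (hf.comp (contDiff_const.mul contDiff_id))

lemma contDiff_gf (k₁ k₂ a b : ℝ) : ContDiff ℝ (⊤ : ℕ∞) (gf k₁ k₂ a b) := by
  rw [gf_eq]
  refine ContDiff.add (ContDiff.mul ?_ ?_) (ContDiff.mul ?_ ?_) <;>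
  · first
    | exact (contDiff_k k₁ _ Real.contDiff_cos a).comp
        (ContinuousLinearMap.proj 0 : (Fin 2 → ℝ) →L[ℝ] ℝ).contDiff
    | exact ((Real.contDiff_sin.comp (contDiff_const.mul contDiff_id))).comp
        (ContinuousLinearMap.proj 1 : (Fin 2 → ℝ) →L[ℝ] ℝ).contDiff
    | exact (contDiff_k k₁ _ Real.contDiff_sin b).comp
        (ContinuousLinearMap.proj 0 : (Fin 2 → ℝ) →L[ℝ] ℝ).contDiff
    | exact ((Real.contDiff_cos.comp (contDiff_const.mul contDiff_id))).comp
        (ContinuousLinearMap.proj 1 : (Fin 2 → ℝ) →L[ℝ] ℝ).contDiff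

lemma per_trig {k : ℝ} (hk : ∃ K : ℕ, 0 < K ∧ k = 2 * Real.pi * K) (t : ℝ) (m : ℤ) :
    Real.sin (k * (t + m)) = Real.sin (k * t) ∧ Real.cos (k * (t + m)) = Real.cos (k * t) := by
  obtain ⟨K, hK, rfl⟩ := hk
  have he : 2 * Real.pi * K * (t + m) = 2 * Real.pi * K * t + (K * m : ℤ) * (2 * Real.pi) := by
    push_cast; ring
  rw [he]
  exact ⟨Real.sin_add_int_mul_two_pi _ _, Real.cos_add_int_mul_two_pi _ _⟩

lemma per_gf {k₁ k₂ : ℝ} (hk₁ : ∃ K : ℕ, 0 < K ∧ k₁ = 2 * Real.pi * K)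
    (hk₂ : ∃ K : ℕ, 0 < K ∧ k₂ = 2 * Real.pi * K) (a b : ℝ) : Per2 (gf k₁ k₂ a b) := by
  intro x m
  simp only [gf, Pi.add_apply]
  rw [(per_trig hk₁ (x 0) (m 0)).1, (per_trig hk₁ (x 0) (m 0)).2,
    (per_trig hk₂ (x 1) (m 1)).1, (per_trig hk₂ (x 1) (m 1)).2]
lemma box_sep (φ ψ : ℝ → ℝ) (hφ : Continuous φ) (hψ : Continuous ψ) :
    ∫ x in Set.Icc (0 : Fin 2 → ℝ) 1, φ (x 0) * ψ (x 1)
      = (∫ s in (0:ℝ)..1, φ s) * (∫ t in (0:ℝ)..1, ψ t) := by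
  have hc : Continuous fun x : Fin 2 → ℝ => φ (x 0) * ψ (x 1) :=
    (hφ.comp (continuous_apply 0)).mul (hψ.comp (continuous_apply 1))
  rw [box_eq _ hc]
  have : ∀ s : ℝ, (∫ t in (0:ℝ)..1, φ (![s, t] 0) * ψ (![s, t] 1))
      = φ s * ∫ t in (0:ℝ)..1, ψ t := by
    intro s
    simp only [Matrix.cons_val_zero, Matrix.cons_val_one, Matrix.head_cons]
    rw [intervalIntegral.integral_const_mul]
  rw [intervalIntegral.integral_congr (fun s _ => this s),
    intervalIntegral.integral_mul_const]

lemma int_gf_zero {k₁ k₂ : ℝ} (hk₁ : ∃ K : ℕ, 0 < K ∧ k₁ = 2 * Real.pi * K)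
    (hk₂ : ∃ K : ℕ, 0 < K ∧ k₂ = 2 * Real.pi * K) (a b : ℝ) :
    ∫ x in Set.Icc (0 : Fin 2 → ℝ) 1, gf k₁ k₂ a b x = 0 := by
  have hcs : Continuous fun t => Real.cos (k₁ * t) :=
    Real.continuous_cos.comp (continuous_const.mul continuous_id)
  have hss : Continuous fun t => Real.sin (k₂ * t) :=
    Real.continuous_sin.comp (continuous_const.mul continuous_id)
  have hs1 : Continuous fun t => Real.sin (k₁ * t) :=
    Real.continuous_sin.comp (continuous_const.mul continuous_id)
  have hc2 : Continuous fun t => Real.cos (k₂ * t) :=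
    Real.continuous_cos.comp (continuous_const.mul continuous_id)
  have he : ∀ x : Fin 2 → ℝ, gf k₁ k₂ a b x
      = a * (Real.cos (k₁ * x 0) * Real.sin (k₂ * x 1))
        + b * (Real.sin (k₁ * x 0) * Real.cos (k₂ * x 1)) := by
    intro x; simp [gf]; ring
  rw [setIntegral_congr_fun measurableSet_Icc (fun x _ => he x),
    integral_add
      ((boxIntegrable (fun x : Fin 2 → ℝ => Real.cos (k₁ * x 0) * Real.sin (k₂ * x 1))
        (by fun_prop)).const_mul a)
      ((boxIntegrable (fun x : Fin 2 → ℝ => Real.sin (k₁ * x 0) * Real.cos (k₂ * x 1))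
        (by fun_prop)).const_mul b),
    integral_const_mul, integral_const_mul,
    box_sep _ _ hcs hss, box_sep _ _ hs1 hc2, intC hk₁, intS hk₁]
  ring

lemma int_gf_sq {k₁ k₂ : ℝ} (hk₁ : ∃ K : ℕ, 0 < K ∧ k₁ = 2 * Real.pi * K)
    (hk₂ : ∃ K : ℕ, 0 < K ∧ k₂ = 2 * Real.pi * K) (a b : ℝ) :
    ∫ x in Set.Icc (0 : Fin 2 → ℝ) 1, gf k₁ k₂ a b x * gf k₁ k₂ a b x
      = (a^2 + b^2) / 4 := by
  have hc1 : Continuous fun t => Real.cos (k₁ * t) ^ 2 :=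
    (Real.continuous_cos.comp (continuous_const.mul continuous_id)).pow 2
  have hs2 : Continuous fun t => Real.sin (k₂ * t) ^ 2 :=
    (Real.continuous_sin.comp (continuous_const.mul continuous_id)).pow 2
  have hs1 : Continuous fun t => Real.sin (k₁ * t) ^ 2 :=
    (Real.continuous_sin.comp (continuous_const.mul continuous_id)).pow 2
  have hc2 : Continuous fun t => Real.cos (k₂ * t) ^ 2 :=
    (Real.continuous_cos.comp (continuous_const.mul continuous_id)).pow 2
  have hsc1 : Continuous fun t => Real.sin (k₁ * t) * Real.cos (k₁ * t) :=
    (Real.continuous_sin.comp (continuous_const.mul continuous_id)).mul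
      (Real.continuous_cos.comp (continuous_const.mul continuous_id))
  have hsc2 : Continuous fun t => Real.sin (k₂ * t) * Real.cos (k₂ * t) :=
    (Real.continuous_sin.comp (continuous_const.mul continuous_id)).mul
      (Real.continuous_cos.comp (continuous_const.mul continuous_id))
  have he : ∀ x : Fin 2 → ℝ, gf k₁ k₂ a b x * gf k₁ k₂ a b x
      = a^2 * ((Real.cos (k₁ * x 0) ^ 2) * (Real.sin (k₂ * x 1) ^ 2))
        + ((2*a*b) * ((Real.sin (k₁ * x 0) * Real.cos (k₁ * x 0))
            * (Real.sin (k₂ * x 1) * Real.cos (k₂ * x 1)))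
          + b^2 * ((Real.sin (k₁ * x 0) ^ 2) * (Real.cos (k₂ * x 1) ^ 2))) := by
    intro x; simp [gf]; ring
  rw [setIntegral_congr_fun measurableSet_Icc (fun x _ => he x)]
  rw [integral_add
      ((boxIntegrable (fun x : Fin 2 → ℝ => Real.cos (k₁ * x 0) ^ 2 * Real.sin (k₂ * x 1) ^ 2)
        (by fun_prop)).const_mul _)
      (boxIntegrable (fun x : Fin 2 → ℝ => 2*a*b * (Real.sin (k₁ * x 0) * Real.cos (k₁ * x 0)
          * (Real.sin (k₂ * x 1) * Real.cos (k₂ * x 1)))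
          + b^2 * (Real.sin (k₁ * x 0) ^ 2 * Real.cos (k₂ * x 1) ^ 2)) (by fun_prop)),
    integral_add
      ((boxIntegrable (fun x : Fin 2 → ℝ => Real.sin (k₁ * x 0) * Real.cos (k₁ * x 0)
        * (Real.sin (k₂ * x 1) * Real.cos (k₂ * x 1))) (by fun_prop)).const_mul _)
      ((boxIntegrable (fun x : Fin 2 → ℝ => Real.sin (k₁ * x 0) ^ 2 * Real.cos (k₂ * x 1) ^ 2)
        (by fun_prop)).const_mul _),
    integral_const_mul, integral_const_mul, integral_const_mul,
    box_sep _ _ hc1 hs2, box_sep _ _ hsc1 hsc2, box_sep _ _ hs1 hc2,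
    intCsq hk₁, intSsq hk₂, intSC hk₁, intSsq hk₁, intCsq hk₂]
  ring

lemma key (l : ℝ) (hl : l ≠ 0) (G H : (Fin 2 → ℝ) → ℝ)
    (hG : ContDiff ℝ (⊤ : ℕ∞) G) (hH : ContDiff ℝ (⊤ : ℕ∞) H) (hPG : Per2 G) (hPH : Per2 H)
    (hlap : ∀ x, lap G x = -l * G x)
    (hG0 : ∫ x in Set.Icc (0 : Fin 2 → ℝ) 1, G x = 0)
    (heq : ∀ x, mean H - lap H x = G x) :
    ∫ x in Set.Icc (0 : Fin 2 → ℝ) 1, G x * H x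
      = l⁻¹ * ∫ x in Set.Icc (0 : Fin 2 → ℝ) 1, G x * G x := by
  have s1 := ibp_lap G H hG hH hPG hPH
  have e1 : ∀ x, lap G x * H x = -l * (G x * H x) := by
    intro x; rw [hlap x]; ring
  have e2 : ∀ x, G x * lap H x = mean H * G x - G x * G x := by
    intro x
    have : lap H x = mean H - G x := by have := heq x; linarith
    rw [this]; ring
  rw [setIntegral_congr_fun measurableSet_Icc (fun x _ => e1 x),
    setIntegral_congr_fun measurableSet_Icc (fun x _ => e2 x),
    integral_const_mul] at s1
  rw [integral_sub
      ((boxIntegrable G hG.continuous).const_mul _)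
      (boxIntegrable (fun x => G x * G x) (hG.continuous.mul hG.continuous)),
    integral_const_mul, hG0, mul_zero, zero_sub] at s1
  have : ∫ x in Set.Icc (0 : Fin 2 → ℝ) 1, G x * H x
      = l⁻¹ * (l * ∫ x in Set.Icc (0 : Fin 2 → ℝ) 1, G x * H x) := by
    field_simp
  rw [this]
  congr 1
  linarith

/-- coefficients of `g i · j` in the basis `cos sin`, `sin cos`. -/
def gA (k₁ k₂ : ℝ) : Fin 2 → Fin 2 → ℝ := ![![2*k₁, 0], ![k₁, k₁]]
def gB (k₁ k₂ : ℝ) : Fin 2 → Fin 2 → ℝ := ![![k₂, k₂], ![0, 2*k₂]]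

/-- explicit values of the unnormalized sectional curvature
`S(eᵢ,v) = (1/4)∫ g⁽ⁱ⁾·h⁽ⁱ⁾ dx` for the 2D `μ`-Camassa–Holm equation, with
`v = (sin(k₁x)sin(k₂y), sin(k₁x)sin(k₂y))`, `g⁽ⁱ⁾ = ∇vᵢ + eᵢ(∇·v)` and
`h⁽ⁱ⁾ = (μ−Δ)⁻¹g⁽ⁱ⁾`; in particular the curvatures are positive. -/
theorem sectional_curvature_positive_example
    (k₁ k₂ : ℝ) (hk₁ : ∃ K : ℕ, 0 < K ∧ k₁ = 2 * Real.pi * K)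
    (hk₂ : ∃ K : ℕ, 0 < K ∧ k₂ = 2 * Real.pi * K)
    (v : (Fin 2 → ℝ) → (Fin 2 → ℝ))
    (hv : ∀ x i, v x i = Real.sin (k₁ * x 0) * Real.sin (k₂ * x 1))
    (g : Fin 2 → (Fin 2 → ℝ) → (Fin 2 → ℝ))
    (hg : ∀ i x j, g i x j = pd j (fun y => v y i) x
        + (if i = j then divg v x else 0))
    (h : Fin 2 → (Fin 2 → ℝ) → (Fin 2 → ℝ))
    (hsm : ∀ i, ContDiff ℝ (⊤ : ℕ∞) (h i)) (hper : ∀ i, PerV (h i))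
    (hinv : ∀ i j x, mean (fun y => h i y j) - lap (fun y => h i y j) x = g i x j)
    (S : Fin 2 → ℝ)
    (hS : ∀ i, S i = (1/4) * ∫ x in Set.Icc (0 : Fin 2 → ℝ) 1, ∑ j, g i x j * h i x j) :
    S 0 = (1/8) * (2 * k₁ ^ 2 + k₂ ^ 2) / (k₁ ^ 2 + k₂ ^ 2)
    ∧ S 1 = (1/8) * (2 * k₂ ^ 2 + k₁ ^ 2) / (k₁ ^ 2 + k₂ ^ 2)
    ∧ (∀ i, 0 < S i) := by
  -- positivity of the frequencies
  have hπ := Real.pi_pos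
  have hk₁pos : 0 < k₁ := by
    obtain ⟨K, hK, rfl⟩ := hk₁
    have : (1:ℝ) ≤ K := by exact_mod_cast hK
    nlinarith
  have hk₂pos : 0 < k₂ := by
    obtain ⟨K, hK, rfl⟩ := hk₂
    have : (1:ℝ) ≤ K := by exact_mod_cast hK
    nlinarith
  set l : ℝ := k₁ ^ 2 + k₂ ^ 2 with hl
  have hlpos : 0 < l := by positivity
  have hlne : l ≠ 0 := ne_of_gt hlpos
  -- the component functions of v
  have hvf : ∀ i : Fin 2, (fun y => v y i)
      = fun y : Fin 2 → ℝ => (fun t => Real.sin (k₁ * t)) (y 0)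
          * (fun t => Real.sin (k₂ * t)) (y 1) := by
    intro i; funext y; simpa using hv y i
  have pdv0 : ∀ (i : Fin 2) x, pd 0 (fun y => v y i) x
      = k₁ * Real.cos (k₁ * x 0) * Real.sin (k₂ * x 1) := by
    intro i x
    rw [hvf i, pd_sep0 _ _ _ _ (fun t => hd_sin k₁ t) (fun t => hd_sin k₂ t)]
  have pdv1 : ∀ (i : Fin 2) x, pd 1 (fun y => v y i) x
      = k₂ * Real.sin (k₁ * x 0) * Real.cos (k₂ * x 1) := by
    intro i x
    rw [hvf i, pd_sep1 _ _ _ _ (fun t => hd_sin k₁ t) (fun t => hd_sin k₂ t)]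
    ring
  have hdiv : ∀ x, divg v x
      = k₁ * Real.cos (k₁ * x 0) * Real.sin (k₂ * x 1)
        + k₂ * Real.sin (k₁ * x 0) * Real.cos (k₂ * x 1) := by
    intro x
    rw [divg, Fin.sum_univ_two, pdv0 0 x, pdv1 1 x]
  -- the coefficients of g as combinations `gf`
  have case00 : (fun x => g 0 x 0) = gf k₁ k₂ (2*k₁) k₂ := by
    funext x; rw [hg 0 x 0, pdv0 0 x, hdiv x, if_pos rfl]; simp only [gf]; ring
  have case01 : (fun x => g 0 x 1) = gf k₁ k₂ 0 k₂ := by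
    funext x; rw [hg 0 x 1, pdv1 0 x, if_neg (by decide), add_zero]; simp only [gf]; ring
  have case10 : (fun x => g 1 x 0) = gf k₁ k₂ k₁ 0 := by
    funext x; rw [hg 1 x 0, pdv0 1 x, if_neg (by decide), add_zero]; simp only [gf]; ring
  have case11 : (fun x => g 1 x 1) = gf k₁ k₂ k₁ (2*k₂) := by
    funext x; rw [hg 1 x 1, pdv1 1 x, hdiv x, if_pos rfl]; simp only [gf]; ring
  have hgf : ∀ i j : Fin 2, (fun x => g i x j)
      = gf k₁ k₂ (gA k₁ k₂ i j) (gB k₁ k₂ i j) := by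
    intro i j
    fin_cases i <;> fin_cases j
    · exact case00
    · exact case01
    · exact case10
    · exact case11
  -- the per-component integral identity
  have main : ∀ i j : Fin 2,
      (∫ x in Set.Icc (0 : Fin 2 → ℝ) 1, g i x j * h i x j)
        = l⁻¹ * (((gA k₁ k₂ i j)^2 + (gB k₁ k₂ i j)^2) / 4) := by
    intro i j
    have hH : ContDiff ℝ (⊤ : ℕ∞) (fun x => h i x j) :=
      (ContinuousLinearMap.proj j : (Fin 2 → ℝ) →L[ℝ] ℝ).contDiff.comp (hsm i)
    have hPH : Per2 (fun x => h i x j) := fun x m => congrFun (hper i x m) j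
    have heq : ∀ x, mean (fun y => h i y j) - lap (fun y => h i y j) x
        = gf k₁ k₂ (gA k₁ k₂ i j) (gB k₁ k₂ i j) x := by
      intro x; rw [← hgf i j]; exact hinv i j x
    have hk := key l hlne (gf k₁ k₂ (gA k₁ k₂ i j) (gB k₁ k₂ i j)) (fun x => h i x j)
      (contDiff_gf k₁ k₂ _ _) hH (per_gf hk₁ hk₂ _ _) hPH
      (fun x => by rw [lap_gf]) (int_gf_zero hk₁ hk₂ _ _) heq
    calc (∫ x in Set.Icc (0 : Fin 2 → ℝ) 1, g i x j * h i x j)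
        = ∫ x in Set.Icc (0 : Fin 2 → ℝ) 1, gf k₁ k₂ (gA k₁ k₂ i j) (gB k₁ k₂ i j) x * h i x j := by
          refine setIntegral_congr_fun measurableSet_Icc fun x _ => ?_
          rw [show g i x j = gf k₁ k₂ (gA k₁ k₂ i j) (gB k₁ k₂ i j) x from congrFun (hgf i j) x]
      _ = l⁻¹ * ∫ x in Set.Icc (0 : Fin 2 → ℝ) 1,
            gf k₁ k₂ (gA k₁ k₂ i j) (gB k₁ k₂ i j) x * gf k₁ k₂ (gA k₁ k₂ i j) (gB k₁ k₂ i j) x := hk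
      _ = l⁻¹ * (((gA k₁ k₂ i j)^2 + (gB k₁ k₂ i j)^2) / 4) := by
          rw [int_gf_sq hk₁ hk₂]
  -- split the sum in the integral
  have hsum : ∀ i : Fin 2, (∫ x in Set.Icc (0 : Fin 2 → ℝ) 1, ∑ j, g i x j * h i x j)
      = (∫ x in Set.Icc (0 : Fin 2 → ℝ) 1, g i x 0 * h i x 0)
        + ∫ x in Set.Icc (0 : Fin 2 → ℝ) 1, g i x 1 * h i x 1 := by
    intro i
    have hint : ∀ j : Fin 2, IntegrableOn (fun x => g i x j * h i x j)
        (Set.Icc (0 : Fin 2 → ℝ) 1) := by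
      intro j
      apply boxIntegrable
      have : Continuous fun x => g i x j := by
        rw [hgf i j]; exact (contDiff_gf k₁ k₂ _ _).continuous
      exact this.mul ((continuous_apply j).comp (hsm i).continuous)
    rw [setIntegral_congr_fun measurableSet_Icc
      (fun x _ => (Fin.sum_univ_two (fun j => g i x j * h i x j))),
      integral_add (hint 0) (hint 1)]
  have hS0 : S 0 = 1/4 * (l⁻¹ * (((2*k₁)^2 + k₂^2)/4) + l⁻¹ * ((0^2 + k₂^2)/4)) := by
    rw [hS 0, hsum 0, main 0 0, main 0 1]
    norm_num [gA, gB]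
  have hS1 : S 1 = 1/4 * (l⁻¹ * ((k₁^2 + 0^2)/4) + l⁻¹ * ((k₁^2 + (2*k₂)^2)/4)) := by
    rw [hS 1, hsum 1, main 1 0, main 1 1]
    norm_num [gA, gB]
  have e0 : S 0 = (1/8) * (2 * k₁ ^ 2 + k₂ ^ 2) / (k₁ ^ 2 + k₂ ^ 2) := by
    rw [hS0]; field_simp; ring
  have e1 : S 1 = (1/8) * (2 * k₂ ^ 2 + k₁ ^ 2) / (k₁ ^ 2 + k₂ ^ 2) := by
    rw [hS1]; field_simp; ring
  refine ⟨e0, e1, ?_⟩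
  intro i
  fin_cases i
  · show 0 < S 0; rw [e0]; positivity
  · show 0 < S 1; rw [e1]; positivity
end
end

section
/- Let i ∈ {1,2}, let eᵢ denote the i-th standard constant vector field on ℝ² and let w : ℝ² → ℝ² be any smooth ℤ²-periodic vector field. Then R(eᵢ,w) = 0, where R is the curvature remainder term of the sectional-curvature formula for the 2D μ-Camassa–Holm equation; since all terms of R(u,v) containing derivatives of u vanish for u = eᵢ, this is equivalent to the identity −⟨∂ᵢw, ∂ᵢw⟩ + ⟨(∇(∂ᵢw))·w, eᵢ⟩ − ⟨∂ᵢ∂ᵢw, w⟩ + ⟨∇w·(∂ᵢw), eᵢ⟩ = 0, where ⟨a,b⟩ = Σⱼ [ μ(aⱼ)μ(bⱼ) + ∫_{[0,1]²} ∇aⱼ·∇bⱼ dx ] and ∂ᵢ is the partial derivative in the i-th coordinate direction. -/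
open MeasureTheory

noncomputable section

/-- The scalar product `⟨a,b⟩ = Σⱼ [ μ(aⱼ)μ(bⱼ) + ∫ ∇aⱼ·∇bⱼ dx ]` induced by the inertia
operator `μ − Δ` on vector fields on the 2-torus. -/
def ipMu (a b : (Fin 2 → ℝ) → (Fin 2 → ℝ)) : ℝ :=
  ∑ j, (mean (fun x => a x j) * mean (fun x => b x j)
    + ∫ x in Set.Icc (0 : Fin 2 → ℝ) 1,
        ∑ k, pd k (fun y => a y j) x * pd k (fun y => b y j) x)

/-! ### Auxiliary lemmas -/

section Aux

open Set

variable {n : ℕ}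

lemma ContDiff.pd' {f : (Fin n → ℝ) → ℝ} (hf : ContDiff ℝ (⊤ : ℕ∞) f) (i : Fin n) :
    ContDiff ℝ (⊤ : ℕ∞) (pd i f) :=
  (hf.fderiv_right (m := ((⊤ : ℕ∞) : WithTop ℕ∞)) (by exact_mod_cast le_top)).clm_apply contDiff_const

lemma pd_continuous {f : (Fin n → ℝ) → ℝ} (hf : ContDiff ℝ (⊤ : ℕ∞) f) (i : Fin n) :
    Continuous (pd i f) := (hf.pd' i).continuous

lemma pd_diff {f : (Fin n → ℝ) → ℝ} (hf : ContDiff ℝ (⊤ : ℕ∞) f) (i : Fin n) (x : Fin n → ℝ) :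
    DifferentiableAt ℝ (pd i f) x := ((hf.pd' i).differentiable (by simp)) x

lemma per_pd_s16 {f : (Fin n → ℝ) → ℝ} (hf : ContDiff ℝ (⊤ : ℕ∞) f) {c : Fin n → ℝ}
    (hp : ∀ x, f (x + c) = f x) (i : Fin n) : ∀ x, pd i f (x + c) = pd i f x := by
  intro x
  have hd : HasFDerivAt f (fderiv ℝ f (x + c)) (x + c) :=
    ((hf.differentiable (by simp)) (x + c)).hasFDerivAt
  have htr : HasFDerivAt (fun y : Fin n → ℝ => y + c) (ContinuousLinearMap.id ℝ (Fin n → ℝ)) x := by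
    exact (hasFDerivAt_id (𝕜 := ℝ) x).add_const c
  have hcomp : HasFDerivAt (fun y => f (y + c))
      ((fderiv ℝ f (x + c)).comp (ContinuousLinearMap.id ℝ (Fin n → ℝ))) x :=
    HasFDerivAt.comp x hd htr
  have he : (fun y => f (y + c)) = f := funext hp
  rw [he, ContinuousLinearMap.comp_id] at hcomp
  show fderiv ℝ f (x + c) (Pi.single i 1) = fderiv ℝ f x (Pi.single i 1)
  rw [hcomp.fderiv]

lemma fderiv_apply_eq_sum {f : (Fin n → ℝ) → ℝ} {x : Fin n → ℝ}
    (hf : DifferentiableAt ℝ f x) (v : Fin n → ℝ) :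
    fderiv ℝ f x v = ∑ k, v k * pd k f x := by
  have hv : v = ∑ k, v k • (Pi.single k 1 : Fin n → ℝ) := by
    funext j
    simp [Pi.single_apply]
  conv_lhs => rw [hv]
  rw [map_sum]
  simp [pd, mul_comm]

lemma pd_mul_s16 (i : Fin n) {f g : (Fin n → ℝ) → ℝ} {x : Fin n → ℝ}
    (hf : DifferentiableAt ℝ f x) (hg : DifferentiableAt ℝ g x) :
    pd i (fun y => f y * g y) x = pd i f x * g x + f x * pd i g x := by
  show fderiv ℝ (fun y => f y * g y) x (Pi.single i 1) = _
  rw [fderiv_fun_mul hf hg]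
  simp [pd]
  ring

lemma pd_sum (i : Fin n) {ι : Type*} (s : Finset ι) {F : ι → (Fin n → ℝ) → ℝ} {x : Fin n → ℝ}
    (hF : ∀ k ∈ s, DifferentiableAt ℝ (F k) x) :
    pd i (fun y => ∑ k ∈ s, F k y) x = ∑ k ∈ s, pd i (F k) x := by
  show fderiv ℝ (fun y => ∑ k ∈ s, F k y) x (Pi.single i 1) = _
  rw [fderiv_fun_sum hF]
  simp [pd]

lemma pd_comm {f : (Fin n → ℝ) → ℝ} (hf : ContDiff ℝ (⊤ : ℕ∞) f) (a b : Fin n) (x : Fin n → ℝ) :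
    pd a (pd b f) x = pd b (pd a f) x := by
  have hsym : IsSymmSndFDerivAt ℝ f x :=
    (hf.contDiffAt).isSymmSndFDerivAt (by rw [minSmoothness_of_isRCLikeNormedField]; exact WithTop.coe_le_coe.mpr (le_top : (2:ℕ∞) ≤ ⊤))
  have hdf : DifferentiableAt ℝ (fderiv ℝ f) x :=
    (((hf.fderiv_right (m := ((⊤ : ℕ∞) : WithTop ℕ∞)) (by exact_mod_cast le_top))).differentiable (by simp)) x
  have key : ∀ u v : Fin n → ℝ,
      fderiv ℝ (fun y => fderiv ℝ f y v) x u = fderiv ℝ (fderiv ℝ f) x u v := by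
    intro u v
    rw [fderiv_clm_apply hdf (differentiableAt_const v)]
    simp
  show fderiv ℝ (fun y => fderiv ℝ f y (Pi.single b 1)) x (Pi.single a 1)
      = fderiv ℝ (fun y => fderiv ℝ f y (Pi.single a 1)) x (Pi.single b 1)
  rw [key, key, hsym.eq]

lemma integral_pd_eq_zero (i : Fin (n+1)) {f : (Fin (n+1) → ℝ) → ℝ}
    (hf : ContDiff ℝ (⊤ : ℕ∞) f) (hp : ∀ x, f (x + Pi.single i 1) = f x) :
    ∫ x in Icc (0 : Fin (n+1) → ℝ) 1, pd i f x = 0 := by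
  classical
  have hle : (0 : Fin (n+1) → ℝ) ≤ 1 := fun _ => zero_le_one
  have hdiff := hf.differentiable (by simp)
  set F : Fin (n+1) → ((Fin (n+1) → ℝ)) → ℝ := fun j x => if j = i then f x else 0 with hF
  set F' : Fin (n+1) → (Fin (n+1) → ℝ) → ((Fin (n+1) → ℝ) →L[ℝ] ℝ) :=
    fun j x => if j = i then fderiv ℝ f x else 0 with hF'
  have hdiv : ∀ x, (∑ j, F' j x (Pi.single j 1)) = pd i f x := by
    intro x
    rw [Finset.sum_eq_single i]
    · simp [hF', pd]
    · intro j _ hj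
      simp [hF', hj]
    · simp
  have Hc : ∀ j, ContinuousOn (F j) (Icc (0:Fin (n+1) → ℝ) 1) := by
    intro j
    by_cases h : j = i
    · subst h; simpa [hF] using hf.continuous.continuousOn
    · simp only [hF, if_neg h]; exact continuousOn_const
  have Hd : ∀ x ∈ (Set.pi Set.univ fun k => Ioo ((0:Fin (n+1)→ℝ) k) ((1:Fin (n+1)→ℝ) k)) \ (∅ : Set _),
      ∀ j, HasFDerivAt (F j) (F' j x) x := by
    intro x _ j
    by_cases h : j = i
    · subst h; simpa [hF, hF'] using (hdiff x).hasFDerivAt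
    · simp only [hF, hF', if_neg h]; exact hasFDerivAt_const (0:ℝ) x
  have Hi : IntegrableOn (fun x => ∑ j, F' j x (Pi.single j 1)) (Icc (0:Fin (n+1)→ℝ) 1) := by
    rw [funext hdiv]
    exact (pd_continuous hf i).continuousOn.integrableOn_compact isCompact_Icc
  have key := integral_divergence_of_hasFDerivAt_off_countable' (0:Fin (n+1)→ℝ) 1 hle F F'
    ∅ Set.countable_empty Hc Hd Hi
  rw [funext hdiv] at key
  rw [key]
  apply Finset.sum_eq_zero
  intro j _
  by_cases h : j = i
  · subst h
    rw [sub_eq_zero]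
    have hins : ∀ y : Fin n → ℝ,
        (Fin.insertNth j ((1:Fin (n+1)→ℝ) j) y : Fin (n+1) → ℝ)
          = (Fin.insertNth j ((0:Fin (n+1)→ℝ) j) y : Fin (n+1) → ℝ) + Pi.single j 1 := by
      intro y; funext k
      rcases eq_or_ne k j with rfl | hk
      · simp
      · obtain ⟨l, rfl⟩ := Fin.exists_succAbove_eq hk
        simp [Fin.insertNth_apply_succAbove, Pi.single_eq_of_ne (Fin.succAbove_ne j l)]
    have : ∀ y : Fin n → ℝ, F j (Fin.insertNth j ((1:Fin (n+1)→ℝ) j) y)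
        = F j (Fin.insertNth j ((0:Fin (n+1)→ℝ) j) y) := by
      intro y
      simp only [hF, if_pos rfl, hins y, hp]
    simp only [this]
  · simp [hF, h]

lemma integrableOn_Icc01 {f : (Fin 2 → ℝ) → ℝ} (hf : Continuous f) :
    IntegrableOn f (Icc (0:Fin 2 → ℝ) 1) :=
  hf.continuousOn.integrableOn_compact isCompact_Icc

lemma mean_single (i j : Fin 2) :
    mean (fun _ : Fin 2 → ℝ => (Pi.single i 1 : Fin 2 → ℝ) j) = (Pi.single i 1 : Fin 2 → ℝ) j := by
  unfold mean
  rw [setIntegral_const]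
  have : (volume (Icc (0:Fin 2 → ℝ) 1)).toReal = 1 := by
    rw [Real.volume_Icc_pi_toReal (a := (0 : Fin 2 → ℝ)) (b := 1) (fun _ => zero_le_one)]
    simp
  rw [measureReal_def, this, one_smul]

lemma ipMu_single_right (i : Fin 2) (a : (Fin 2 → ℝ) → (Fin 2 → ℝ)) :
    ipMu a (fun _ => Pi.single i 1) = mean (fun x => a x i) := by
  unfold ipMu
  have hint : ∀ j : Fin 2, (∫ x in Icc (0:Fin 2 → ℝ) 1,
      ∑ k, pd k (fun y => a y j) x * pd k (fun y => (Pi.single i 1 : Fin 2 → ℝ) j) x) = 0 := by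
    intro j
    have : ∀ x : Fin 2 → ℝ, (∑ k, pd k (fun y => a y j) x
        * pd k (fun y : Fin 2 → ℝ => (Pi.single i 1 : Fin 2 → ℝ) j) x) = 0 := by
      intro x
      apply Finset.sum_eq_zero
      intro k _
      have : pd k (fun _ : Fin 2 → ℝ => (Pi.single i 1 : Fin 2 → ℝ) j) x = 0 := by
        simp [pd]
      rw [this, mul_zero]
    rw [funext this]
    simp
  rw [Finset.sum_congr rfl (fun j _ => by rw [hint j, add_zero, mean_single])]
  rw [Finset.sum_eq_single i]
  · simp
  · intro j _ hj
    simp [Pi.single_eq_of_ne hj]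
  · simp

end Aux

/-- the curvature remainder `R(eᵢ,w)` vanishes for constant directions `eᵢ`:
`−⟨∂ᵢw,∂ᵢw⟩ + ⟨(∇(∂ᵢw))·w, eᵢ⟩ − ⟨∂ᵢ∂ᵢw, w⟩ + ⟨∇w·(∂ᵢw), eᵢ⟩ = 0`. -/
theorem curvature_remainder_vanishes (i : Fin 2)
    (w : (Fin 2 → ℝ) → (Fin 2 → ℝ)) (hw : ContDiff ℝ (⊤ : ℕ∞) w) (hwper : PerV w) :
    -ipMu (fun x j => pd i (fun y => w y j) x) (fun x j => pd i (fun y => w y j) x)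
    + ipMu (fun x j => fderiv ℝ (fun y => pd i (fun z => w z j) y) x (w x))
        (fun _ => Pi.single i 1)
    - ipMu (fun x j => pd i (pd i (fun y => w y j)) x) w
    + ipMu (fun x j => fderiv ℝ (fun y => w y j) x (fun k => pd i (fun z => w z k) x))
        (fun _ => Pi.single i 1) = 0 := by
  classical
  have hW : ∀ j : Fin 2, ContDiff ℝ (⊤ : ℕ∞) (fun x => w x j) := fun j =>
    (ContinuousLinearMap.proj (R := ℝ) (φ := fun _ : Fin 2 => ℝ) j).contDiff.comp hw
  set c : Fin 2 → ℝ := Pi.single i 1 with hc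
  have hWper : ∀ (j : Fin 2) (x : Fin 2 → ℝ), w (x + c) j = w x j := by
    intro j x
    have h := hwper x (Pi.single i 1)
    have hcast : (fun k => ((Pi.single i (1:ℤ) : Fin 2 → ℤ) k : ℝ)) = c := by
      funext k
      rcases eq_or_ne k i with rfl | hk
      · simp [hc]
      · simp [hc, Pi.single_eq_of_ne hk]
    rw [hcast] at h
    exact congrFun h j
  have hWd : ∀ (j : Fin 2) (x : Fin 2 → ℝ), DifferentiableAt ℝ (fun y => w y j) x :=
    fun j x => ((hW j).differentiable (by simp)) x
  have hzero : ∀ (f : (Fin 2 → ℝ) → ℝ), ContDiff ℝ (⊤ : ℕ∞) f → (∀ x, f (x + c) = f x) →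
      (∫ x in Set.Icc (0:Fin 2 → ℝ) 1, pd i f x) = 0 := by
    intro f hf hp
    exact integral_pd_eq_zero (n := 1) i hf (by simpa [hc] using hp)
  -- first term
  have E1 : ipMu (fun x j => pd i (fun y => w y j) x) (fun x j => pd i (fun y => w y j) x)
      = ∑ j, ∫ x in Set.Icc (0:Fin 2 → ℝ) 1,
          ∑ k, pd k (pd i (fun y => w y j)) x * pd k (pd i (fun y => w y j)) x := by
    unfold ipMu
    refine Finset.sum_congr rfl fun j _ => ?_
    have hm : mean (fun x => pd i (fun y => w y j) x) = 0 :=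
      hzero (fun y => w y j) (hW j) (hWper j)
    rw [hm, zero_mul, zero_add]
  -- third term
  have E3 : ipMu (fun x j => pd i (pd i (fun y => w y j)) x) w
      = ∑ j, ∫ x in Set.Icc (0:Fin 2 → ℝ) 1,
          ∑ k, pd k (pd i (pd i (fun y => w y j))) x * pd k (fun y => w y j) x := by
    unfold ipMu
    refine Finset.sum_congr rfl fun j _ => ?_
    have hm : mean (fun x => pd i (pd i (fun y => w y j)) x) = 0 :=
      hzero (pd i (fun y => w y j)) ((hW j).pd' i) (per_pd_s16 (hW j) (hWper j) i)
    rw [hm, zero_mul, zero_add]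
  -- second term
  have E2 : ipMu (fun x j => fderiv ℝ (fun y => pd i (fun z => w z j) y) x (w x))
        (fun _ => Pi.single i 1)
      = ∫ x in Set.Icc (0:Fin 2 → ℝ) 1,
          ∑ k, w x k * pd k (pd i (fun z => w z i)) x := by
    rw [ipMu_single_right]
    show (∫ x in Set.Icc (0:Fin 2 → ℝ) 1, fderiv ℝ (fun y => pd i (fun z => w z i) y) x (w x)) = _
    have hpt : ∀ x : Fin 2 → ℝ, fderiv ℝ (fun y => pd i (fun z => w z i) y) x (w x)
        = ∑ k, w x k * pd k (pd i (fun z => w z i)) x := by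
      intro x
      exact fderiv_apply_eq_sum (pd_diff (hW i) i x) (w x)
    exact congrArg (fun F => ∫ x in Set.Icc (0:Fin 2 → ℝ) 1, F x) (funext hpt)
  -- fourth term
  have E4 : ipMu (fun x j => fderiv ℝ (fun y => w y j) x (fun k => pd i (fun z => w z k) x))
        (fun _ => Pi.single i 1)
      = ∫ x in Set.Icc (0:Fin 2 → ℝ) 1,
          ∑ k, pd i (fun z => w z k) x * pd k (fun y => w y i) x := by
    rw [ipMu_single_right]
    show (∫ x in Set.Icc (0:Fin 2 → ℝ) 1,
        fderiv ℝ (fun y => w y i) x (fun k => pd i (fun z => w z k) x)) = _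
    have hpt : ∀ x : Fin 2 → ℝ, fderiv ℝ (fun y => w y i) x (fun k => pd i (fun z => w z k) x)
        = ∑ k, pd i (fun z => w z k) x * pd k (fun y => w y i) x := by
      intro x
      simpa using fderiv_apply_eq_sum (hWd i x) (fun k => pd i (fun z => w z k) x)
    exact congrArg (fun F => ∫ x in Set.Icc (0:Fin 2 → ℝ) 1, F x) (funext hpt)
  rw [E1, E2, E3, E4]
  -- claim: second plus fourth integrals cancel
  have c24 : (∫ x in Set.Icc (0:Fin 2 → ℝ) 1, ∑ k, w x k * pd k (pd i (fun z => w z i)) x)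
      + (∫ x in Set.Icc (0:Fin 2 → ℝ) 1,
          ∑ k, pd i (fun z => w z k) x * pd k (fun y => w y i) x) = 0 := by
    set g : (Fin 2 → ℝ) → ℝ := fun x => ∑ k, pd k (fun y => w y i) x * w x k with hgdef
    have hg : ContDiff ℝ (⊤ : ℕ∞) g := by
      apply ContDiff.sum
      intro k _
      exact (((hW i).pd' k)).mul (hW k)
    have hgper : ∀ x, g (x + c) = g x := by
      intro x
      refine Finset.sum_congr rfl fun k _ => ?_
      rw [per_pd_s16 (hW i) (hWper i) k x, hWper k x]
    have hpt : ∀ x : Fin 2 → ℝ, pd i g x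
        = (∑ k, w x k * pd k (pd i (fun z => w z i)) x)
          + ∑ k, pd i (fun z => w z k) x * pd k (fun y => w y i) x := by
      intro x
      have hd : ∀ k ∈ (Finset.univ : Finset (Fin 2)),
          DifferentiableAt ℝ (fun y => pd k (fun z => w z i) y * w y k) x :=
        fun k _ => (pd_diff (hW i) k x).mul (hWd k x)
      rw [hgdef]
      rw [pd_sum i Finset.univ hd]
      have hterm : ∀ k : Fin 2, pd i (fun y => pd k (fun z => w z i) y * w y k) x
          = w x k * pd k (pd i (fun z => w z i)) x
            + pd i (fun z => w z k) x * pd k (fun z => w z i) x := by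
        intro k
        rw [pd_mul_s16 i (pd_diff (hW i) k x) (hWd k x)]
        rw [pd_comm (hW i) i k x]
        ring
      rw [Finset.sum_congr rfl (fun k _ => hterm k), Finset.sum_add_distrib]
    have h0 : (∫ x in Set.Icc (0:Fin 2 → ℝ) 1, pd i g x) = 0 := hzero g hg hgper
    have hsplit : (∫ x in Set.Icc (0:Fin 2 → ℝ) 1, pd i g x)
        = ∫ x in Set.Icc (0:Fin 2 → ℝ) 1,
            ((∑ k, w x k * pd k (pd i (fun z => w z i)) x)
              + ∑ k, pd i (fun z => w z k) x * pd k (fun y => w y i) x) :=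
      congrArg (fun F => ∫ x in Set.Icc (0:Fin 2 → ℝ) 1, F x) (funext hpt)
    rw [hsplit] at h0
    rw [integral_add
      (integrableOn_Icc01 (f := fun x => ∑ k, w x k * pd k (pd i (fun z => w z i)) x)
        (continuous_finset_sum _ fun k _ =>
        ((hW k).continuous).mul (pd_continuous ((hW i).pd' i) k)))
      (integrableOn_Icc01 (f := fun x => ∑ k, pd i (fun z => w z k) x * pd k (fun y => w y i) x)
        (continuous_finset_sum _ fun k _ =>
        (pd_continuous (hW k) i).mul (pd_continuous (hW i) k)))] at h0
    exact h0
  -- claim: first and third integrals cancel for each j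
  have c13 : ∀ j : Fin 2,
      (∫ x in Set.Icc (0:Fin 2 → ℝ) 1,
        ∑ k, pd k (pd i (fun y => w y j)) x * pd k (pd i (fun y => w y j)) x)
      + (∫ x in Set.Icc (0:Fin 2 → ℝ) 1,
        ∑ k, pd k (pd i (pd i (fun y => w y j))) x * pd k (fun y => w y j) x) = 0 := by
    intro j
    set g : (Fin 2 → ℝ) → ℝ :=
      fun x => ∑ k, pd k (pd i (fun y => w y j)) x * pd k (fun y => w y j) x with hgdef
    have hg : ContDiff ℝ (⊤ : ℕ∞) g := by
      apply ContDiff.sum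
      intro k _
      exact (((hW j).pd' i).pd' k).mul ((hW j).pd' k)
    have hgper : ∀ x, g (x + c) = g x := by
      intro x
      refine Finset.sum_congr rfl fun k _ => ?_
      rw [per_pd_s16 ((hW j).pd' i) (per_pd_s16 (hW j) (hWper j) i) k x,
        per_pd_s16 (hW j) (hWper j) k x]
    have hpt : ∀ x : Fin 2 → ℝ, pd i g x
        = (∑ k, pd k (pd i (fun y => w y j)) x * pd k (pd i (fun y => w y j)) x)
          + ∑ k, pd k (pd i (pd i (fun y => w y j))) x * pd k (fun y => w y j) x := by
      intro x
      have hd : ∀ k ∈ (Finset.univ : Finset (Fin 2)),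
          DifferentiableAt ℝ (fun y => pd k (pd i (fun z => w z j)) y * pd k (fun z => w z j) y) x :=
        fun k _ => (pd_diff ((hW j).pd' i) k x).mul (pd_diff (hW j) k x)
      rw [hgdef]
      rw [pd_sum i Finset.univ hd]
      have hterm : ∀ k : Fin 2,
          pd i (fun y => pd k (pd i (fun z => w z j)) y * pd k (fun z => w z j) y) x
          = pd k (pd i (fun y => w y j)) x * pd k (pd i (fun y => w y j)) x
            + pd k (pd i (pd i (fun y => w y j))) x * pd k (fun y => w y j) x := by
        intro k
        rw [pd_mul_s16 i (pd_diff ((hW j).pd' i) k x) (pd_diff (hW j) k x)]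
        rw [pd_comm ((hW j).pd' i) i k x, pd_comm (hW j) i k x]
        ring
      rw [Finset.sum_congr rfl (fun k _ => hterm k), Finset.sum_add_distrib]
    have h0 : (∫ x in Set.Icc (0:Fin 2 → ℝ) 1, pd i g x) = 0 := hzero g hg hgper
    have hsplit : (∫ x in Set.Icc (0:Fin 2 → ℝ) 1, pd i g x)
        = ∫ x in Set.Icc (0:Fin 2 → ℝ) 1,
            ((∑ k, pd k (pd i (fun y => w y j)) x * pd k (pd i (fun y => w y j)) x)
              + ∑ k, pd k (pd i (pd i (fun y => w y j))) x * pd k (fun y => w y j) x) :=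
      congrArg (fun F => ∫ x in Set.Icc (0:Fin 2 → ℝ) 1, F x) (funext hpt)
    rw [hsplit] at h0
    rw [integral_add
      (integrableOn_Icc01
        (f := fun x => ∑ k, pd k (pd i (fun y => w y j)) x * pd k (pd i (fun y => w y j)) x)
        (continuous_finset_sum _ fun k _ =>
        (pd_continuous ((hW j).pd' i) k).mul (pd_continuous ((hW j).pd' i) k)))
      (integrableOn_Icc01
        (f := fun x => ∑ k, pd k (pd i (pd i (fun y => w y j))) x * pd k (fun y => w y j) x)
        (continuous_finset_sum _ fun k _ =>
        (pd_continuous (((hW j).pd' i).pd' i) k).mul (pd_continuous (hW j) k)))] at h0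
    exact h0
  have hsum : (∑ j : Fin 2, ∫ x in Set.Icc (0:Fin 2 → ℝ) 1,
        ∑ k, pd k (pd i (fun y => w y j)) x * pd k (pd i (fun y => w y j)) x)
      + (∑ j : Fin 2, ∫ x in Set.Icc (0:Fin 2 → ℝ) 1,
        ∑ k, pd k (pd i (pd i (fun y => w y j))) x * pd k (fun y => w y j) x) = 0 := by
    rw [← Finset.sum_add_distrib]
    exact Finset.sum_eq_zero fun j _ => c13 j
  linarith [c24, hsum]
end
end
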